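/- arXiv:1107.4847 — 10 statements merged into one kernel-verified Lean document; each statement's English description precedes it below -/
import Mathlib

section
/- Let Γ be a weighted directed graph on a finite nonempty vertex set V. Every eigenvalue λ of the normalized Laplace operator Δ satisfies: either λ = 0, or |1 − λ| ≤ r_2 := max_{i∈V_R} (Σ_{j∈V_R} |w_{ij}|)/|d_i^in| (with r_2 = 0 if V_R = ∅); in particular |1 − λ| ≤ r for every nonzero eigenvalue λ, so spec(Δ) ⊆ 𝒟(1,r_2) ∪ {0} ⊆ 𝒟(1,r) ∪ {0}, where 𝒟(c,ρ) is the closed disk in ℂ of center c and radius ρ. -/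
/-- In-degree of vertex `i`: `d_i^in = ∑_j w_{ij}`. -/
noncomputable def din {V : Type*} [Fintype V] (w : V → V → ℝ) (i : V) : ℝ :=
  ∑ j, w i j

/-- The normalized Laplace operator of a weighted directed graph, as a complex matrix. -/
noncomputable def lap {V : Type*} [Fintype V] [DecidableEq V] (w : V → V → ℝ) :
    Matrix V V ℂ :=
  Matrix.of fun i j =>
    if din w i = 0 then 0
    else (if i = j then 1 else 0) - ((w i j / din w i : ℝ) : ℂ)

/-- Eigenvalues of the normalized Laplacian, with algebraic multiplicity. -/
noncomputable def specL {V : Type*} [Fintype V] [DecidableEq V] (w : V → V → ℝ) :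
    Multiset ℂ :=
  (lap w).charpoly.roots

/-- `r(i) = (∑_j |w_{ij}|)/|d_i^in|` if `d_i^in ≠ 0`, and `r(i) = 0` otherwise. -/
noncomputable def rfun {V : Type*} [Fintype V] (w : V → V → ℝ) (i : V) : ℝ :=
  if din w i = 0 then 0 else (∑ j, |w i j|) / |din w i|

/-- `r = max_{i ∈ V} r(i)`. -/
noncomputable def rmax {V : Type*} [Fintype V] [Nonempty V] (w : V → V → ℝ) : ℝ :=
  Finset.univ.sup' Finset.univ_nonempty (rfun w)

/-- `r_2 = max_{i ∈ V_R} (∑_{j ∈ V_R} |w_{ij}|)/|d_i^in|` (and `r_2 = 0` for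
quasi-isolated vertices / if `V_R = ∅`). -/
noncomputable def rtwo {V : Type*} [Fintype V] [Nonempty V] (w : V → V → ℝ) : ℝ :=
  Finset.univ.sup' Finset.univ_nonempty fun i =>
    if din w i = 0 then 0
    else (∑ j ∈ Finset.univ.filter fun j => din w j ≠ 0, |w i j|) / |din w i|

/-! A nonzero eigenvalue `λ` of `Δ` has an eigenvector vanishing at every quasi-isolated vertex,
so `1 - λ` is an eigenvalue of `D⁻¹W` restricted to `V_R`. Gershgorin's theorem bounds every
eigenvalue of a matrix by its largest absolute row sum, which for this restricted matrix is `r_2`. -/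

namespace Matrix

variable {K n : Type*} [Fintype n] [DecidableEq n]

theorem exists_mulVec_eq_smul_of_mem_roots_charpoly [Field K] {A : Matrix n n K} {μ : K}
    (hμ : μ ∈ A.charpoly.roots) : ∃ v ≠ 0, A *ᵥ v = μ • v := by
  have hspec : μ ∈ spectrum K (toLin' A) := by
    rw [spectrum_toLin', mem_spectrum_iff_isRoot_charpoly]
    exact (Polynomial.mem_roots A.charpoly_monic.ne_zero).1 hμ
  obtain ⟨v, hv, hv0⟩ := (Module.End.hasEigenvalue_iff_mem_spectrum.2 hspec).exists_hasEigenvector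
  exact ⟨v, hv0, by simpa using Module.End.mem_eigenspace_iff.1 hv⟩

theorem norm_le_of_hasEigenvalue_of_sum_norm_le [NormedField K] {A : Matrix n n K} {μ : K}
    {C : ℝ} (hμ : Module.End.HasEigenvalue (toLin' A) μ) (hC : ∀ i, ∑ j, ‖A i j‖ ≤ C) :
    ‖μ‖ ≤ C := by
  obtain ⟨k, hk⟩ := eigenvalue_mem_ball hμ
  calc ‖μ‖ ≤ ‖A k k‖ + ∑ j ∈ Finset.univ.erase k, ‖A k j‖ :=
        norm_le_of_mem_closedBall hk
    _ = ∑ j, ‖A k j‖ := Finset.add_sum_erase _ (fun j => ‖A k j‖) (Finset.mem_univ k)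
    _ ≤ C := hC k

end Matrix

section NormalizedLaplacian

open scoped Matrix

variable {V : Type*} [Fintype V]

/-- `D⁻¹W` restricted to `V_R`, so that `Δ = 1 - D⁻¹W` there. -/
noncomputable def reducedTransition (w : V → V → ℝ) :
    Matrix {i // din w i ≠ 0} {i // din w i ≠ 0} ℂ :=
  Matrix.of fun i j => ((w i j / din w i : ℝ) : ℂ)

theorem lap_mulVec_apply [DecidableEq V] (w : V → V → ℝ) (v : V → ℂ) (i : V) :
    (lap w *ᵥ v) i =
      if din w i = 0 then 0 else v i - ∑ j, ((w i j / din w i : ℝ) : ℂ) * v j := by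
  by_cases hi : din w i = 0
  · simp [Matrix.mulVec, dotProduct, lap, hi]
  · simp [Matrix.mulVec, dotProduct, lap, hi, sub_mul, Finset.sum_sub_distrib]

theorem eq_zero_of_lap_mulVec_eq_smul [DecidableEq V] {w : V → V → ℝ} {v : V → ℂ} {μ : ℂ}
    (hv : lap w *ᵥ v = μ • v) (hμ : μ ≠ 0) {i : V} (hi : din w i = 0) : v i = 0 := by
  have h := congrFun hv i
  rw [lap_mulVec_apply, if_pos hi, Pi.smul_apply, smul_eq_mul] at h
  exact (mul_eq_zero.1 h.symm).resolve_left hμ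

theorem hasEigenvalue_reducedTransition [DecidableEq V] {w : V → V → ℝ} {μ : ℂ}
    (hμ : μ ∈ specL w) (hμ0 : μ ≠ 0) :
    Module.End.HasEigenvalue (Matrix.toLin' (reducedTransition w)) (1 - μ) := by
  obtain ⟨v, hv0, hv⟩ := Matrix.exists_mulVec_eq_smul_of_mem_roots_charpoly hμ
  have hvanish : ∀ i, din w i = 0 → v i = 0 := fun i => eq_zero_of_lap_mulVec_eq_smul hv hμ0
  set u : {i // din w i ≠ 0} → ℂ := fun i => v i
  have hu0 : u ≠ 0 := by
    obtain ⟨i, hi⟩ := Function.ne_iff.1 hv0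
    exact Function.ne_iff.2 ⟨⟨i, fun h => hi (hvanish i h)⟩, hi⟩
  refine Module.End.hasEigenvalue_of_hasEigenvector ⟨Module.End.mem_eigenspace_iff.2 ?_, hu0⟩
  ext ⟨i, hi⟩
  have hrow := congrFun hv i
  rw [lap_mulVec_apply, if_neg hi, Pi.smul_apply, smul_eq_mul] at hrow
  have hsum : ∑ j : {j // din w j ≠ 0}, ((w i j / din w i : ℝ) : ℂ) * v j =
      ∑ j, ((w i j / din w i : ℝ) : ℂ) * v j := by
    rw [← Finset.sum_subtype (Finset.univ.filter fun j => din w j ≠ 0)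
        (p := fun j => din w j ≠ 0) (by simp) fun j => ((w i j / din w i : ℝ) : ℂ) * v j]
    exact Finset.sum_filter_of_ne fun j _ hj => mt (fun hd => by rw [hvanish j hd, mul_zero]) hj
  simp only [Matrix.toLin'_apply, Matrix.mulVec, dotProduct, reducedTransition, Matrix.of_apply,
    Pi.smul_apply, smul_eq_mul, u]
  linear_combination hsum - hrow

theorem sum_norm_reducedTransition_le_rtwo [Nonempty V] (w : V → V → ℝ)
    (i : {i // din w i ≠ 0}) : ∑ j, ‖reducedTransition w i j‖ ≤ rtwo w := by
  have hrow : ∑ j, ‖reducedTransition w i j‖ =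
      (∑ j ∈ Finset.univ.filter fun j => din w j ≠ 0, |w i j|) / |din w i| := by
    simp only [reducedTransition, Matrix.of_apply, Complex.norm_real, Real.norm_eq_abs, abs_div,
      ← Finset.sum_div]
    rw [Finset.sum_subtype (Finset.univ.filter fun j => din w j ≠ 0)
      (p := fun j => din w j ≠ 0) (by simp)]
  refine hrow.le.trans (le_of_eq_of_le ?_ (Finset.le_sup' _ (Finset.mem_univ (i : V))))
  simp [i.2]

theorem rtwo_le_rmax [Nonempty V] (w : V → V → ℝ) : rtwo w ≤ rmax w := by
  refine Finset.sup'_le _ _ fun i _ => le_trans ?_ (Finset.le_sup' (rfun w) (Finset.mem_univ i))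
  unfold rfun
  split_ifs
  · rfl
  · gcongr
    exact Finset.filter_subset _ _

end NormalizedLaplacian

theorem spec_subset_disk_general {V : Type*} [Fintype V] [DecidableEq V] [Nonempty V]
    (w : V → V → ℝ) :
    ∀ lam ∈ specL w, lam = 0 ∨
      (‖1 - lam‖ ≤ rtwo w ∧ ‖1 - lam‖ ≤ rmax w) := by
  intro lam hlam
  refine or_iff_not_imp_left.2 fun hlam0 => ?_
  have hdisk : ‖1 - lam‖ ≤ rtwo w :=
    Matrix.norm_le_of_hasEigenvalue_of_sum_norm_le (hasEigenvalue_reducedTransition hlam hlam0)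
      (sum_norm_reducedTransition_le_rtwo w)
  exact ⟨hdisk, hdisk.trans (rtwo_le_rmax w)⟩

/-- every eigenvalue `λ` of the normalized Laplacian satisfies `λ = 0` or
`|1 - λ| ≤ r_2 ≤ r`, i.e. `spec(Δ) ⊆ 𝒟(1, r_2) ∪ {0} ⊆ 𝒟(1, r) ∪ {0}`. -/
theorem spec_subset_disk {V : Type*} [Fintype V] [DecidableEq V] [Nonempty V]
    (w : V → V → ℝ) (hloop : ∀ i, w i i = 0) :
    ∀ lam ∈ specL w, lam = 0 ∨
      (‖1 - lam‖ ≤ rtwo w ∧ ‖1 - lam‖ ≤ rmax w) :=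
  spec_subset_disk_general w
end

section
/- Let Γ be a weighted directed graph on a finite vertex set V and let Γ' be the induced subgraph on a nonempty subset V' ⊆ V with the restricted weight function. If either (i) Γ' is quasi-isolated and V' is a union of strongly connected components of Γ, or (ii) Γ' is isolated, then every eigenvalue of Δ(Γ') is an eigenvalue of Δ(Γ): spec(Δ(Γ')) ⊆ spec(Δ(Γ)) as sets. -/
/-- Vertex `j` reaches vertex `i` along directed edges. -/
def reaches {V : Type*} (w : V → V → ℝ) (j i : V) : Prop :=
  Relation.ReflTransGen (fun a b => w b a ≠ 0) j i

/-!
Order the strongly connected components of `Γ` compatibly with reachability and refine this to a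
linear order. Since `w i j ≠ 0` forces the component of `j` to lie above that of `i`, `Δ(Γ)` is
block lower triangular along the components, so its characteristic polynomial is the product of
those of its diagonal blocks. Quasi-isolation makes the in-degrees of `Γ'` those of `Γ`, so
`Δ(Γ')` is the principal submatrix of `Δ(Γ)` on `V'`, whose diagonal blocks are the blocks of
`Δ(Γ)` over the components in `V'`. Hence `χ(Δ(Γ')) ∣ χ(Δ(Γ))`. An isolated subgraph is
quasi-isolated and closed under reaching backwards, so it is a union of components.
-/

universe u

open Finset

theorem exists_monotone_linearOrder_antisymmRel_of_eq (α : Type u) [Preorder α] :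
    ∃ (β : Type u) (_ : LinearOrder β) (f : α → β),
      Monotone f ∧ ∀ a b, f a = f b → AntisymmRel (· ≤ ·) a b := by
  refine ⟨LinearExtension (Antisymmetrization α (· ≤ ·)), inferInstance,
    fun a => toLinearExtension (toAntisymmetrization _ a),
    toLinearExtension.monotone.comp toAntisymmetrization_mono, fun a b hab => ?_⟩
  have hab' : toAntisymmetrization (· ≤ ·) a = toAntisymmetrization (· ≤ ·) b := hab
  exact ⟨toAntisymmetrization_le_toAntisymmetrization_iff.mp hab'.le,
    toAntisymmetrization_le_toAntisymmetrization_iff.mp hab'.ge⟩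

theorem Matrix.BlockTriangular.charpoly_submatrix_dvd {R m α : Type*} [CommRing R] [Fintype m]
    [DecidableEq m] [LinearOrder α] {M : Matrix m m R} {b : m → α} (hM : M.BlockTriangular b)
    (s : Finset m) (hs : ∀ i ∈ s, ∀ j, b j = b i → j ∈ s) :
    (M.submatrix ((↑) : s → m) (↑)).charpoly ∣ M.charpoly := by
  have hblock : ∀ a ∈ univ.image (b ∘ ((↑) : s → m)),
      ((M.submatrix ((↑) : s → m) (↑)).toSquareBlock (b ∘ (↑)) a).charpoly =
        (M.toSquareBlock b a).charpoly := by
    intro a ha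
    obtain ⟨x, -, rfl⟩ := mem_image.mp ha
    let e : {i : s // b i = b x} ≃ {i : m // b i = b x} :=
      Equiv.subtypeSubtypeEquivSubtype fun {i} hi => hs x x.2 i hi
    rw [← Matrix.charpoly_reindex e]
    rfl
  rw [hM.charpoly, hM.submatrix.charpoly, prod_congr rfl hblock, ← image_image]
  exact prod_dvd_prod_of_subset _ _ _ (image_subset_image (subset_univ _))

variable {V : Type u} (w : V → V → ℝ)

abbrev reachPreorder : Preorder V where
  le i j := reaches w j i
  le_refl _ := .refl
  le_trans _ _ _ hij hjk := hjk.trans hij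

theorem exists_linearOrder_monotone_along_edges :
    ∃ (β : Type u) (_ : LinearOrder β) (b : V → β),
      (∀ i j, w i j ≠ 0 → b i ≤ b j) ∧ ∀ i j, b i = b j → reaches w i j ∧ reaches w j i := by
  let := reachPreorder w
  obtain ⟨β, _, b, hmono, hfib⟩ := exists_monotone_linearOrder_antisymmRel_of_eq V
  exact ⟨β, _, b, fun i j hij => hmono (Relation.ReflTransGen.single hij),
    fun i j hb => ⟨(hfib i j hb).2, (hfib i j hb).1⟩⟩

theorem mem_of_reaches_of_isolated {V' : Finset V} (hiso : ∀ i ∈ V', ∀ j ∉ V', w i j = 0)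
    {i j : V} (hi : i ∈ V') (hji : reaches w j i) : j ∈ V' := by
  induction hji using Relation.ReflTransGen.head_induction_on with
  | refl => exact hi
  | head hedge _ ih => exact not_not.mp fun hk => hedge (hiso _ ih _ hk)

variable [Fintype V] [DecidableEq V]

theorem lap_blockTriangular {α : Type*} [LinearOrder α] {b : V → α}
    (hb : ∀ i j, w i j ≠ 0 → b i ≤ b j) : (lap w).BlockTriangular b := by
  intro i j hji
  have hij : i ≠ j := by rintro rfl; exact lt_irrefl _ hji
  have hw : w i j = 0 := not_not.mp fun h => (hb i j h).not_gt hji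
  simp [lap, hw, hij]

theorem din_restrict {V' : Finset V} (hquasi : ∀ i ∈ V', ∑ j ∈ V'ᶜ, w i j = 0) (i : V') :
    din (fun i j : V' => w i j) i = din w i := by
  rw [din, din, ← sum_add_sum_compl V' (w i), hquasi i i.2, add_zero]
  exact sum_coe_sort V' (w i)

theorem lap_restrict {V' : Finset V} (hquasi : ∀ i ∈ V', ∑ j ∈ V'ᶜ, w i j = 0) :
    lap (fun i j : V' => w i j) = (lap w).submatrix (↑) (↑) := by
  ext i j
  simp only [lap, Matrix.of_apply, Matrix.submatrix_apply, din_restrict w hquasi, Subtype.ext_iff]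

theorem spec_induced_subgraph_subset_general {V : Type*} [Fintype V] [DecidableEq V]
    (w : V → V → ℝ)
    (V' : Finset V)
    (h : ((∀ i ∈ V', ∑ j ∈ V'ᶜ, w i j = 0) ∧
            (∀ i ∈ V', ∀ j, reaches w i j ∧ reaches w j i → j ∈ V')) ∨
          (∀ i ∈ V', ∀ j ∉ V', w i j = 0)) :
    ∀ lam : ℂ, lam ∈ specL (fun i j : {x // x ∈ V'} => w i j) → lam ∈ specL w := by
  obtain ⟨hquasi, hscc⟩ : (∀ i ∈ V', ∑ j ∈ V'ᶜ, w i j = 0) ∧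
      (∀ i ∈ V', ∀ j, reaches w i j ∧ reaches w j i → j ∈ V') :=
    h.elim id fun hiso =>
      ⟨fun i hi => sum_eq_zero fun j hj => hiso i hi j (mem_compl.mp hj),
        fun i hi j hij => mem_of_reaches_of_isolated w hiso hi hij.2⟩
  obtain ⟨β, _, b, hb, hfib⟩ := exists_linearOrder_monotone_along_edges w
  have hdvd : (lap fun i j : V' => w i j).charpoly ∣ (lap w).charpoly := by
    rw [lap_restrict w hquasi]
    exact (lap_blockTriangular w hb).charpoly_submatrix_dvd V'
      fun i hi j hj => hscc i hi j (hfib i j hj.symm)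
  intro lam hlam
  exact Multiset.mem_of_le (Polynomial.roots.le_of_dvd (Matrix.charpoly_monic _).ne_zero hdvd) hlam

/-- let `Γ'` be the induced subgraph on a nonempty `V' ⊆ V`.  If either
(i) `Γ'` is quasi-isolated (`∑_{j ∉ V'} w_{ij} = 0` for all `i ∈ V'`) and `V'` is a union
of strongly connected components of `Γ` (closed under mutual reachability), or
(ii) `Γ'` is isolated (`w_{ij} = 0` for `i ∈ V'`, `j ∉ V'`),
then every eigenvalue of `Δ(Γ')` is an eigenvalue of `Δ(Γ)`. -/
theorem spec_induced_subgraph_subset {V : Type*} [Fintype V] [DecidableEq V]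
    (w : V → V → ℝ) (hloop : ∀ i, w i i = 0)
    (V' : Finset V) (hne : V'.Nonempty)
    (h : ((∀ i ∈ V', ∑ j ∈ V'ᶜ, w i j = 0) ∧
            (∀ i ∈ V', ∀ j, reaches w i j ∧ reaches w j i → j ∈ V')) ∨
          (∀ i ∈ V', ∀ j ∉ V', w i j = 0)) :
    ∀ lam : ℂ, lam ∈ specL (fun i j : {x // x ∈ V'} => w i j) → lam ∈ specL w :=
  spec_induced_subgraph_subset_general w V' h
end

section
/- Let Γ be a weighted directed graph on a finite vertex set V with nonnegative weights (w_{ij} ≥ 0 for all i,j), and let Γ_i be a strongly connected component of Γ with vertex set V_i. Let Δ_i = Δ_Ω with Ω = V_i be the Dirichlet Laplace operator on V_i. Then 0 is an eigenvalue of Δ_i if and only if Γ_i is isolated; and in that case 0 is a simple eigenvalue of Δ_i (algebraic multiplicity 1). -/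
/-- The Dirichlet Laplace operator `Δ_Ω` on `Ω = S`:
`(Δ_Ω v)(i) = v(i) - (1/d_i^in) ∑_{j ∈ Ω} w_{ij} v(j)` if `d_i^in ≠ 0` (in-degree in `Γ`),
and `0` otherwise, as a complex matrix indexed by `S`. -/
noncomputable def dlap {V : Type*} [Fintype V] [DecidableEq V] (w : V → V → ℝ)
    (S : Finset V) : Matrix {x // x ∈ S} {x // x ∈ S} ℂ :=
  Matrix.of fun i j =>
    if din w i.1 = 0 then 0
    else (if i = j then 1 else 0) - ((w i.1 j.1 / din w i.1 : ℝ) : ℂ)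

/-- `S` is a strongly connected component of `Γ` (an equivalence class of mutual
reachability). -/
def IsSCC {V : Type*} (w : V → V → ℝ) (S : Finset V) : Prop :=
  S.Nonempty ∧ ∀ i ∈ S, ∀ j, j ∈ S ↔ (reaches w i j ∧ reaches w j i)

/-! A vector `v` on `S` is killed by `Δ_S` iff `d_i v_i = ∑_{j ∈ S} w_{ij} v_j` for all `i ∈ S`.
At a vertex where `‖v‖` is maximal this forces `∑_{j ∈ S} w_{ij} = d_i` and `‖v_j‖ = ‖v_i‖` for
every in-neighbour `j`; strong connectivity spreads this over all of `S`. Hence a nonzero kernel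
vector exists only if `S` is isolated, and then, applied to `v - v_{i₀}`, the kernel is spanned by
the constants.

The eigenvalue is simple: if `Δ² v = 0` then `Δ v ≡ a` is constant, and at a minimum `i` of
`u = Re (conj a · v)` we get `d_i |a|² = d_i u_i - ∑_j w_{ij} u_j ≤ 0`, so `a = 0`. Thus the
generalised `0`-eigenspace is the kernel, and its dimension is the algebraic multiplicity. -/

namespace Matrix

variable {K n : Type*} [Field K] [Fintype n] [DecidableEq n]

theorem zero_mem_roots_charpoly_iff (M : Matrix n n K) :
    (0 : K) ∈ M.charpoly.roots ↔ ∃ v ≠ 0, M *ᵥ v = 0 := by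
  rw [Polynomial.mem_roots M.charpoly_monic.ne_zero, exists_mulVec_eq_zero_iff,
    det_eq_sign_charpoly_coeff, Polynomial.IsRoot, ← Polynomial.coeff_zero_eq_eval_zero]
  simp

theorem count_zero_roots_charpoly_eq_finrank_ker [DecidableEq K] (M : Matrix n n K)
    (h : ∀ v, M *ᵥ (M *ᵥ v) = 0 → M *ᵥ v = 0) :
    M.charpoly.roots.count 0 = Module.finrank K (LinearMap.ker M.mulVecLin) := by
  rw [Polynomial.count_roots, Polynomial.rootMultiplicity_eq_natTrailingDegree',
    ← charpoly_toLin', ← LinearMap.finrank_maxGenEigenspace_zero_eq]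
  suffices hmax : Module.End.maxGenEigenspace M.toLin' 0 = LinearMap.ker M.mulVecLin by rw [hmax]
  have hker : ∀ k, LinearMap.ker (M.toLin' ^ 1) = LinearMap.ker (M.toLin' ^ (1 + k)) :=
    Module.End.ker_pow_constant <| le_antisymm (LinearMap.ker_le_ker_comp _ _) fun v hv => by
      simpa using h v (by simpa [pow_two] using hv)
  ext v
  simp only [Module.End.mem_maxGenEigenspace, zero_smul, sub_zero]
  constructor
  · rintro ⟨_ | k, hk⟩
    · simp_all
    · have : v ∈ LinearMap.ker (M.toLin' ^ 1) := by rw [hker, add_comm]; exact hk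
      simpa using this
  · intro hv
    exact ⟨1, by simpa using hv⟩

end Matrix

open Matrix

theorem IsSCC.forall_of_closed {V : Type*} {w : V → V → ℝ} {S : Finset V} (hS : IsSCC w S)
    {Q : S → Prop} {i₀ : S} (h₀ : Q i₀) (hstep : ∀ i j : S, Q i → w i j ≠ 0 → Q j) (j : S) :
    Q j := by
  suffices h : ∀ a, reaches w a i₀ → ∀ ha : a ∈ S, Q ⟨a, ha⟩ from
    h j ((hS.2 i₀ i₀.2 j).mp j.2).2 j.2
  intro a ha
  induction ha using Relation.ReflTransGen.head_induction_on with
  | refl => exact fun _ => h₀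
  | @head a c hac hc ih =>
    intro ha
    have hcS : c ∈ S := (hS.2 a ha c).mpr
      ⟨.single hac, hc.trans ((hS.2 i₀ i₀.2 a).mp ha).1⟩
    exact hstep ⟨c, hcS⟩ ⟨a, ha⟩ (ih hcS) hac

def IsIsolated {V : Type*} (w : V → V → ℝ) (S : Finset V) : Prop :=
  ∀ i ∈ S, ∀ j ∉ S, w i j = 0

section Dirichlet

variable {V : Type*} [Fintype V] {w : V → V → ℝ} {S : Finset V}

theorem din_nonneg (hpos : ∀ i j, 0 ≤ w i j) (i : V) : 0 ≤ din w i :=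
  Finset.sum_nonneg fun j _ => hpos i j

theorem eq_zero_of_din_eq_zero (hpos : ∀ i j, 0 ≤ w i j) {i : V} (hi : din w i = 0) (j : V) :
    w i j = 0 :=
  (Finset.sum_eq_zero_iff_of_nonneg fun k _ => hpos i k).mp hi j (Finset.mem_univ j)

theorem sum_subtype_le_din (hpos : ∀ i j, 0 ≤ w i j) (i : V) :
    ∑ j : S, w i j ≤ din w i := by
  rw [Finset.sum_coe_sort S (w i)]
  exact Finset.sum_le_sum_of_subset_of_nonneg (Finset.subset_univ S) fun j _ _ => hpos i j

theorem sum_subtype_eq_din_iff (hpos : ∀ i j, 0 ≤ w i j) (i : V) :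
    ∑ j : S, w i j = din w i ↔ ∀ j ∉ S, w i j = 0 := by
  classical
  rw [Finset.sum_coe_sort S (w i), din, ← Finset.sum_sdiff (Finset.subset_univ S),
    right_eq_add, Finset.sum_eq_zero_iff_of_nonneg fun j _ => hpos i j]
  simp

theorem norm_eq_of_isMax_norm (hpos : ∀ i j, 0 ≤ w i j) {v : S → ℂ}
    (hv : ∀ i : S, din w i * v i = ∑ j : S, w i j * v j) {i : S}
    (hmax : ∀ j, ‖v j‖ ≤ ‖v i‖) :
    din w i * ‖v i‖ = (∑ j : S, w i j) * ‖v i‖ ∧ ∀ j : S, w i j ≠ 0 → ‖v j‖ = ‖v i‖ := by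
  have hle : ∀ j : S, w i j * ‖v j‖ ≤ w i j * ‖v i‖ :=
    fun j => mul_le_mul_of_nonneg_left (hmax j) (hpos _ _)
  have h₁ : din w i * ‖v i‖ ≤ ∑ j : S, w i j * ‖v j‖ := calc
    din w i * ‖v i‖ = ‖∑ j : S, (w i j : ℂ) * v j‖ := by
      rw [← hv i, norm_mul, Complex.norm_real, Real.norm_of_nonneg (din_nonneg hpos i)]
    _ ≤ ∑ j : S, ‖(w i j : ℂ) * v j‖ := norm_sum_le _ _
    _ = ∑ j : S, w i j * ‖v j‖ := by
      simp only [norm_mul, Complex.norm_real, Real.norm_of_nonneg (hpos _ _)]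
  have h₂ : ∑ j : S, w i j * ‖v j‖ ≤ ∑ j : S, w i j * ‖v i‖ := Finset.sum_le_sum fun j _ => hle j
  have h₃ : (∑ j : S, w i j) * ‖v i‖ ≤ din w i * ‖v i‖ :=
    mul_le_mul_of_nonneg_right (sum_subtype_le_din hpos i) (norm_nonneg _)
  rw [← Finset.sum_mul] at h₂
  refine ⟨by linarith, fun j hj => mul_left_cancel₀ hj ?_⟩
  have heq : ∑ j : S, w i j * ‖v j‖ = ∑ j : S, w i j * ‖v i‖ := by
    rw [← Finset.sum_mul]; linarith
  exact (Finset.sum_eq_sum_iff_of_le fun j _ => hle j).mp heq j (Finset.mem_univ j)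

variable [DecidableEq V]

theorem dlap_mulVec_apply_of_din_eq_zero {i : S} (hi : din w i = 0) (v : S → ℂ) :
    (dlap w S *ᵥ v) i = 0 := by
  simp [dlap, mulVec, dotProduct, hi]

/-- A vertex with `din w i = 0` has no in-edges, so after multiplying by `din w i` the case split
in `dlap` disappears. -/
theorem din_mul_dlap_mulVec_apply (hpos : ∀ i j, 0 ≤ w i j) (v : S → ℂ) (i : S) :
    din w i * (dlap w S *ᵥ v) i = din w i * v i - ∑ j : S, w i j * v j := by
  by_cases hi : din w i = 0
  · simp [dlap_mulVec_apply_of_din_eq_zero hi, hi, eq_zero_of_din_eq_zero hpos hi]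
  · have hi' : (din w i : ℂ) ≠ 0 := by exact_mod_cast hi
    simp only [dlap, mulVec, dotProduct, of_apply, if_neg hi, sub_mul, ite_mul, one_mul,
      zero_mul, Finset.sum_sub_distrib, Finset.sum_ite_eq, Finset.mem_univ, if_true,
      Complex.ofReal_div, mul_sub, Finset.mul_sum]
    congr 1
    refine Finset.sum_congr rfl fun j _ => ?_
    field_simp

theorem dlap_mulVec_eq_zero_iff (hpos : ∀ i j, 0 ≤ w i j) (v : S → ℂ) :
    dlap w S *ᵥ v = 0 ↔ ∀ i : S, din w i * v i = ∑ j : S, w i j * v j := by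
  refine funext_iff.trans (forall_congr' fun i => ?_)
  rw [Pi.zero_apply, ← sub_eq_zero (a := (din w i : ℂ) * v i), ← din_mul_dlap_mulVec_apply hpos]
  by_cases hi : din w i = 0
  · simp [dlap_mulVec_apply_of_din_eq_zero hi]
  · simp [hi]

theorem norm_eq_norm_of_dlap_mulVec_eq_zero (hpos : ∀ i j, 0 ≤ w i j) (hS : IsSCC w S)
    {v : S → ℂ} (hv : dlap w S *ᵥ v = 0) (i j : S) : ‖v i‖ = ‖v j‖ := by
  rw [dlap_mulVec_eq_zero_iff hpos] at hv
  have := hS.1.coe_sort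
  obtain ⟨i₀, -, hi₀⟩ := Finset.exists_max_image Finset.univ (‖v ·‖) Finset.univ_nonempty
  have hconst : ∀ k, ‖v k‖ = ‖v i₀‖ := hS.forall_of_closed (Q := fun k => ‖v k‖ = ‖v i₀‖) rfl
    fun k l hk hkl => by
      have hmax : ∀ j, ‖v j‖ ≤ ‖v k‖ := fun j => hk ▸ hi₀ j (Finset.mem_univ j)
      exact hk ▸ (norm_eq_of_isMax_norm hpos hv hmax).2 l hkl
  rw [hconst i, hconst j]

theorem isolated_of_dlap_mulVec_eq_zero (hpos : ∀ i j, 0 ≤ w i j) (hS : IsSCC w S)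
    {v : S → ℂ} (hv₀ : v ≠ 0) (hv : dlap w S *ᵥ v = 0) : IsIsolated w S := by
  obtain ⟨k, hk⟩ := Function.ne_iff.mp hv₀
  intro i hi
  have hnorm := norm_eq_norm_of_dlap_mulVec_eq_zero hpos hS hv
  have hvi : 0 < ‖v ⟨i, hi⟩‖ := by rw [hnorm _ k]; exact norm_pos_iff.mpr hk
  rw [← sum_subtype_eq_din_iff hpos]
  exact (mul_right_cancel₀ hvi.ne' (norm_eq_of_isMax_norm hpos
    ((dlap_mulVec_eq_zero_iff hpos v).mp hv) fun j => (hnorm j _).le).1).symm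

theorem dlap_mulVec_one (hpos : ∀ i j, 0 ≤ w i j) (hiso : IsIsolated w S) :
    dlap w S *ᵥ 1 = 0 := by
  refine (dlap_mulVec_eq_zero_iff hpos 1).mpr fun i => ?_
  simp only [Pi.one_apply, mul_one]
  exact_mod_cast ((sum_subtype_eq_din_iff hpos i).mpr (hiso i i.2)).symm

theorem eq_of_dlap_mulVec_eq_zero (hpos : ∀ i j, 0 ≤ w i j) (hS : IsSCC w S)
    (hiso : IsIsolated w S) {v : S → ℂ} (hv : dlap w S *ᵥ v = 0) (i j : S) :
    v i = v j := by
  have hu : dlap w S *ᵥ (v - v i • 1) = 0 := by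
    rw [mulVec_sub, mulVec_smul, dlap_mulVec_one hpos hiso, hv, smul_zero, sub_zero]
  have := norm_eq_norm_of_dlap_mulVec_eq_zero hpos hS hu j i
  simp only [Pi.sub_apply, Pi.smul_apply, Pi.one_apply, smul_eq_mul, mul_one, sub_self,
    norm_zero, norm_eq_zero, sub_eq_zero] at this
  exact this.symm

theorem ker_mulVecLin_dlap (hpos : ∀ i j, 0 ≤ w i j) (hS : IsSCC w S)
    (hiso : IsIsolated w S) :
    LinearMap.ker (dlap w S).mulVecLin = ℂ ∙ 1 := by
  obtain ⟨i₀⟩ := hS.1.coe_sort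
  ext v
  rw [LinearMap.mem_ker, mulVecLin_apply, Submodule.mem_span_singleton]
  constructor
  · intro hv
    exact ⟨v i₀, funext fun i => by simp [eq_of_dlap_mulVec_eq_zero hpos hS hiso hv i₀ i]⟩
  · rintro ⟨c, rfl⟩
    rw [mulVec_smul, dlap_mulVec_one hpos hiso, smul_zero]

theorem dlap_mulVec_eq_zero_of_sq (hpos : ∀ i j, 0 ≤ w i j) (hS : IsSCC w S)
    (hiso : IsIsolated w S) {v : S → ℂ} (hv : dlap w S *ᵥ (dlap w S *ᵥ v) = 0) :
    dlap w S *ᵥ v = 0 := by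
  obtain ⟨i₀⟩ := hS.1.coe_sort
  have : Nonempty S := ⟨i₀⟩
  set a := (dlap w S *ᵥ v) i₀
  have hconst : ∀ i, (dlap w S *ᵥ v) i = a :=
    fun i => eq_of_dlap_mulVec_eq_zero hpos hS hiso hv i i₀
  suffices ha : a = 0 from funext fun i => (hconst i).trans ha
  set u : S → ℝ := fun j => (star a * v j).re
  obtain ⟨i, -, hi⟩ := Finset.exists_min_image Finset.univ u Finset.univ_nonempty
  have hre : din w i * ‖a‖ ^ 2 = din w i * u i - ∑ j : S, w i j * u j := by
    have h := congrArg Complex.re (din_mul_dlap_mulVec_apply hpos (star a • v) i)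
    simp only [mulVec_smul, Pi.smul_apply, hconst i, smul_eq_mul] at h
    simp only [Complex.mul_re, Complex.ofReal_re, Complex.ofReal_im, zero_mul, sub_zero,
      Complex.sub_re, Complex.re_sum, Complex.star_def, Complex.conj_mul'] at h
    exact_mod_cast h
  have hmin : din w i * u i ≤ ∑ j : S, w i j * u j := calc
    din w i * u i = ∑ j : S, w i j * u i := by
      rw [← Finset.sum_mul, (sum_subtype_eq_din_iff hpos i).mpr (hiso i i.2)]
    _ ≤ ∑ j : S, w i j * u j :=
      Finset.sum_le_sum fun j _ => mul_le_mul_of_nonneg_left (hi j (Finset.mem_univ _)) (hpos _ _)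
  have h0 : din w i * ‖a‖ ^ 2 = 0 :=
    le_antisymm (by linarith) (mul_nonneg (din_nonneg hpos _) (sq_nonneg _))
  rcases mul_eq_zero.mp h0 with hi | ha
  · rw [← hconst i, dlap_mulVec_apply_of_din_eq_zero hi]
  · exact norm_eq_zero.mp (pow_eq_zero_iff two_ne_zero |>.mp ha)

end Dirichlet

theorem dirichlet_zero_eigenvalue_iff_isolated_general {V : Type*} [Fintype V] [DecidableEq V]
    (w : V → V → ℝ) (hpos : ∀ i j, 0 ≤ w i j)
    (S : Finset V) (hS : IsSCC w S) :
    ((0 : ℂ) ∈ (dlap w S).charpoly.roots ↔ ∀ i ∈ S, ∀ j ∉ S, w i j = 0) ∧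
    ((∀ i ∈ S, ∀ j ∉ S, w i j = 0) → ((dlap w S).charpoly.roots).count 0 = 1) := by
  have := hS.1.coe_sort
  refine ⟨(zero_mem_roots_charpoly_iff _).trans ⟨fun ⟨v, hv₀, hv⟩ =>
    isolated_of_dlap_mulVec_eq_zero hpos hS hv₀ hv, fun hiso =>
    ⟨1, one_ne_zero, dlap_mulVec_one hpos hiso⟩⟩, fun hiso => ?_⟩
  rw [count_zero_roots_charpoly_eq_finrank_ker _ fun v => dlap_mulVec_eq_zero_of_sq hpos hS hiso,
    ker_mulVecLin_dlap hpos hS hiso, finrank_span_singleton one_ne_zero]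

/-- for a graph with nonnegative weights and a strongly connected component
`Γ_i` with vertex set `V_i`, `0` is an eigenvalue of the Dirichlet Laplacian `Δ_i` iff
`Γ_i` is isolated, and in that case `0` is a simple eigenvalue (algebraic multiplicity 1). -/
theorem dirichlet_zero_eigenvalue_iff_isolated {V : Type*} [Fintype V] [DecidableEq V]
    (w : V → V → ℝ) (hloop : ∀ i, w i i = 0) (hpos : ∀ i j, 0 ≤ w i j)
    (S : Finset V) (hS : IsSCC w S) :
    ((0 : ℂ) ∈ (dlap w S).charpoly.roots ↔ ∀ i ∈ S, ∀ j ∉ S, w i j = 0) ∧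
    ((∀ i ∈ S, ∀ j ∉ S, w i j = 0) → ((dlap w S).charpoly.roots).count 0 = 1) :=
  dirichlet_zero_eigenvalue_iff_isolated_general w hpos S hS
end

section
/- Let Γ be a weighted directed graph on a finite nonempty vertex set V with nonnegative weights (w_{ij} ≥ 0 for all i,j), and let k be a positive integer. The following are equivalent: (i) the algebraic multiplicity of the eigenvalue 1 of P := I − Δ equals k; (ii) the algebraic multiplicity of the eigenvalue 0 of the normalized Laplace operator Δ equals k; (iii) Γ has exactly k isolated strongly connected components; (iv) the minimum cardinality of a set R ⊆ V such that every vertex of V is reachable from some vertex of R along directed edges (i.e., the minimum number of directed trees needed to span Γ) equals k. -/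
/-- The induced subgraph on `S` is isolated. -/
def IsolatedF {V : Type*} (w : V → V → ℝ) (S : Finset V) : Prop :=
  ∀ i ∈ S, ∀ j ∉ S, w i j = 0

/-!
Write `Δ = I - P` with `P` row-stochastic. As `P` does not increase the sup norm, `Δ²v = 0` forces
`Δv = 0` (otherwise `Pᵐv = v - m Δv` would be unbounded), so the algebraic multiplicity of `0` is
`dim ker Δ`, and that of `1` for `P` is the same. By the maximum principle a harmonic function is
determined by its values on the isolated strongly connected components, where it is constant, and
solving a Dirichlet problem shows that these constants are arbitrary; so `dim ker Δ` is the number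
of isolated components. Every vertex is reached from an isolated component, and nothing outside an
isolated component reaches into it, so a smallest set of roots picks one vertex in each.
-/

open Finset Matrix

section Reachability

variable {V : Type*} {w : V → V → ℝ}

theorem reaches_refl (w : V → V → ℝ) (i : V) : reaches w i i :=
  Relation.ReflTransGen.refl

theorem reaches.trans {a b c : V} (hab : reaches w a b) (hbc : reaches w b c) :
    reaches w a c :=
  Relation.ReflTransGen.trans hab hbc

theorem reaches_of_ne_zero {a b : V} (h : w b a ≠ 0) : reaches w a b :=
  Relation.ReflTransGen.single h

theorem reaches.mem_of_closed {D : Set V} (hD : ∀ b ∈ D, ∀ a, w b a ≠ 0 → a ∈ D) {a b : V}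
    (h : reaches w a b) (hb : b ∈ D) : a ∈ D := by
  induction h with
  | refl => exact hb
  | tail _ hcb ih => exact ih (hD _ hb _ hcb)

theorem IsolatedF.mem_of_reaches {S : Finset V} (hS : IsolatedF w S) {a b : V}
    (h : reaches w a b) (hb : b ∈ S) : a ∈ S :=
  h.mem_of_closed (D := ↑S) (fun b hb a hba => by_contra fun ha => hba (hS b hb a ha)) hb

theorem IsSCC.reaches {S : Finset V} (hS : IsSCC w S) {i j : V} (hi : i ∈ S) (hj : j ∈ S) :
    reaches w i j :=
  ((hS.2 i hi j).1 hj).1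

theorem IsSCC.eq_of_mem {S T : Finset V} (hS : IsSCC w S) (hT : IsSCC w T) {x : V}
    (hxS : x ∈ S) (hxT : x ∈ T) : S = T := by
  ext j
  rw [hS.2 x hxS j, hT.2 x hxT j]

def isolatedSCCs (w : V → V → ℝ) : Set (Finset V) :=
  {S | IsSCC w S ∧ IsolatedF w S}

noncomputable def sccRep (T : isolatedSCCs w) : V :=
  T.2.1.1.choose

theorem sccRep_mem (T : isolatedSCCs w) : sccRep T ∈ (T : Finset V) :=
  T.2.1.1.choose_spec

theorem sccRep_injective : Function.Injective (sccRep (w := w)) := fun S T h =>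
  Subtype.ext (S.2.1.eq_of_mem T.2.1 (sccRep_mem S) (h ▸ sccRep_mem T))

end Reachability

section SCC

variable {V : Type*} [Fintype V] {w : V → V → ℝ}

open Classical in
noncomputable def sccOf (w : V → V → ℝ) (i : V) : Finset V :=
  univ.filter fun j => reaches w i j ∧ reaches w j i

theorem mem_sccOf {i j : V} : j ∈ sccOf w i ↔ reaches w i j ∧ reaches w j i := by
  simp [sccOf]

theorem mem_sccOf_self (i : V) : i ∈ sccOf w i :=
  mem_sccOf.2 ⟨reaches_refl w i, reaches_refl w i⟩

theorem isSCC_sccOf (i : V) : IsSCC w (sccOf w i) := by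
  refine ⟨⟨i, mem_sccOf_self i⟩, fun a ha j => ?_⟩
  rw [mem_sccOf] at ha ⊢
  exact ⟨fun h => ⟨ha.2.trans h.1, h.2.trans ha.1⟩, fun h => ⟨ha.1.trans h.1, h.2.trans ha.2⟩⟩

theorem IsSCC.sccOf_eq {S : Finset V} (hS : IsSCC w S) {i : V} (hi : i ∈ S) : sccOf w i = S :=
  (isSCC_sccOf i).eq_of_mem hS (mem_sccOf_self i) hi

theorem isolatedF_sccOf {j : V} (hj : ∀ y, reaches w y j → reaches w j y) :
    IsolatedF w (sccOf w j) := by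
  intro a ha y hy
  by_contra hay
  rw [mem_sccOf] at ha
  have hyj : reaches w y j := (reaches_of_ne_zero hay).trans ha.2
  exact hy (mem_sccOf.2 ⟨hj y hyj, hyj⟩)

theorem exists_reaches_forall_reaches (i : V) :
    ∃ j, reaches w j i ∧ ∀ y, reaches w y j → reaches w j y := by
  classical
  let anc : V → Finset V := fun j => univ.filter (reaches w · j)
  obtain ⟨j, hji, hmin⟩ := (anc i).exists_min_image (fun j => (anc j).card)
    ⟨i, by simp [anc, reaches_refl]⟩
  simp only [anc, mem_filter, mem_univ, true_and] at hji hmin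
  refine ⟨j, hji, fun y hyj => by_contra fun hjy => ?_⟩
  have hsub : anc y ⊂ anc j := by
    refine Finset.ssubset_iff_subset_ne.2 ⟨fun z hz => ?_, fun h => hjy ?_⟩
    · simp only [anc, mem_filter, mem_univ, true_and] at hz ⊢
      exact hz.trans hyj
    · have : j ∈ anc j := by simp [anc, reaches_refl]
      simpa [anc, ← h] using this
  exact (card_lt_card hsub).not_ge (hmin y (hyj.trans hji))

theorem exists_isolatedSCC_reaches (i : V) :
    ∃ S ∈ isolatedSCCs w, ∀ r ∈ S, reaches w r i := by
  obtain ⟨j, hji, hj⟩ := exists_reaches_forall_reaches (w := w) i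
  exact ⟨sccOf w j, ⟨isSCC_sccOf j, isolatedF_sccOf hj⟩,
    fun r hr => (mem_sccOf.1 hr).2.trans hji⟩

theorem isLeast_ncard_isolatedSCCs (w : V → V → ℝ) :
    IsLeast {m : ℕ | ∃ R : Finset V, R.card = m ∧ ∀ i, ∃ r ∈ R, reaches w r i}
      (isolatedSCCs w).ncard := by
  constructor
  · refine ⟨(Set.finite_range (sccRep (w := w))).toFinset, ?_, fun i => ?_⟩
    · rw [← Set.ncard_eq_toFinset_card, Set.ncard_range_of_injective sccRep_injective,
        Nat.card_coe_set_eq]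
    · obtain ⟨S, hS, hSi⟩ := exists_isolatedSCC_reaches (w := w) i
      exact ⟨sccRep ⟨S, hS⟩, by simp, hSi _ (sccRep_mem ⟨S, hS⟩)⟩
  · rintro m ⟨R, rfl, hR⟩
    have hroot : ∀ T : isolatedSCCs w, ∃ r : R, r.1 ∈ (T : Finset V) := fun T => by
      obtain ⟨r, hrR, hr⟩ := hR (sccRep T)
      exact ⟨⟨r, hrR⟩, T.2.2.mem_of_reaches hr (sccRep_mem T)⟩
    choose f hf using hroot
    have hinj : Function.Injective f := fun S T h =>
      Subtype.ext (S.2.1.eq_of_mem T.2.1 (hf S) (h ▸ hf T))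
    rw [← Nat.card_coe_set_eq, ← Nat.card_eq_finsetCard]
    exact Nat.card_le_card_of_injective f hinj

end SCC

section Stochastic

theorem eq_sum_smul_of_norm_le {ι E : Type*} [Fintype ι] [NormedAddCommGroup E]
    [InnerProductSpace ℝ E] {a : ι → ℝ} (ha : ∀ j, 0 ≤ a j) (hsum : ∑ j, a j = 1) {x : ι → E}
    (hle : ∀ j, ‖x j‖ ≤ ‖∑ i, a i • x i‖) {j : ι} (hj : a j ≠ 0) :
    x j = ∑ i, a i • x i := by
  have hconv : StrictConvexOn ℝ Set.univ fun y : E => ‖y‖ ^ 2 :=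
    (strongConvexOn_iff_convex.2 (by simpa using convexOn_const (0 : ℝ) convex_univ)).strictConvexOn
      two_pos
  refine (hconv.map_sum_eq_iff' (fun i _ => ha i) hsum fun _ _ => Set.mem_univ _).1
    (le_antisymm (hconv.convexOn.map_sum_le (fun i _ => ha i) hsum fun _ _ => Set.mem_univ _) ?_)
    j (mem_univ j) hj
  calc ∑ i, a i • ‖x i‖ ^ 2 ≤ ∑ i, a i • ‖∑ i, a i • x i‖ ^ 2 := by
        gcongr with i
        · exact ha i
        · exact hle i
    _ = ‖∑ i, a i • x i‖ ^ 2 := by rw [← sum_smul, hsum, one_smul]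

variable {V : Type*} [Fintype V]

theorem mulVec_map_ofReal_apply (P : Matrix V V ℝ) (x : V → ℂ) (i : V) :
    (P.map Complex.ofReal *ᵥ x) i = ∑ j, P i j • x j := by
  simp [mulVec, dotProduct, Complex.real_smul]

variable [DecidableEq V] {P : Matrix V V ℝ}

theorem norm_mulVec_map_ofReal_le (hP : P ∈ rowStochastic ℝ V) (x : V → ℂ) :
    ‖P.map Complex.ofReal *ᵥ x‖ ≤ ‖x‖ := by
  refine (pi_norm_le_iff_of_nonneg (norm_nonneg x)).2 fun i => ?_
  rw [mulVec_map_ofReal_apply]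
  calc ‖∑ j, P i j • x j‖ ≤ ∑ j, P i j * ‖x‖ := by
        refine (norm_sum_le _ _).trans (sum_le_sum fun j _ => ?_)
        rw [norm_smul, Real.norm_of_nonneg (nonneg_of_mem_rowStochastic hP)]
        exact mul_le_mul_of_nonneg_left (norm_le_pi_norm x j) (nonneg_of_mem_rowStochastic hP)
    _ = ‖x‖ := by rw [← sum_mul, sum_row_of_mem_rowStochastic hP, one_mul]

theorem mulVec_map_ofReal_apply_eq (hP : P ∈ rowStochastic ℝ V) {x : V → ℂ} {i : V} {c : ℂ}
    (h : ∀ j, P i j ≠ 0 → x j = c) : (P.map Complex.ofReal *ᵥ x) i = c := by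
  rw [mulVec_map_ofReal_apply]
  calc ∑ j, P i j • x j = ∑ j, P i j • c := sum_congr rfl fun j _ => by
        rcases eq_or_ne (P i j) 0 with hj | hj
        · simp [hj]
        · rw [h j hj]
    _ = c := by rw [← sum_smul, sum_row_of_mem_rowStochastic hP, one_smul]

theorem eq_of_mulVec_map_ofReal_apply_eq (hP : P ∈ rowStochastic ℝ V) {x : V → ℂ} {i j : V}
    (hmax : ∀ k, ‖x k‖ ≤ ‖x i‖) (hfix : (P.map Complex.ofReal *ᵥ x) i = x i)
    (hj : P i j ≠ 0) : x j = x i := by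
  rw [mulVec_map_ofReal_apply] at hfix
  rw [← hfix]
  exact eq_sum_smul_of_norm_le (fun _ => nonneg_of_mem_rowStochastic hP)
    (sum_row_of_mem_rowStochastic hP i) (by rwa [hfix]) hj

end Stochastic

theorem eq_zero_of_map_eq_self_of_map_eq_sub {E : Type*} [NormedAddCommGroup E]
    [NormedSpace ℝ E] (f : E →+ E) (hf : ∀ x, ‖f x‖ ≤ ‖x‖) {u x : E} (hu : f u = u)
    (hx : f x = x - u) : u = 0 := by
  -- `fᵐ x = x - m • u` stays bounded.
  have hbound : ∀ m : ℕ, ‖x - m • u‖ ≤ ‖x‖ := by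
    intro m
    induction m with
    | zero => simp
    | succ m ih =>
      calc ‖x - (m + 1) • u‖ = ‖f (x - m • u)‖ := by
            rw [map_sub, map_nsmul, hx, hu, add_smul, one_smul]; abel_nf
        _ ≤ ‖x‖ := (hf _).trans ih
  have hmul : ∀ m : ℕ, m * ‖u‖ ≤ 2 * ‖x‖ := fun m =>
    calc m * ‖u‖ = ‖x - (x - m • u)‖ := by rw [sub_sub_cancel, RCLike.norm_nsmul ℝ, nsmul_eq_mul]
      _ ≤ ‖x‖ + ‖x - m • u‖ := norm_sub_le _ _
      _ ≤ 2 * ‖x‖ := by linarith [hbound m]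
  by_contra hu0
  obtain ⟨m, hm⟩ := exists_nat_gt (2 * ‖x‖ / ‖u‖)
  rw [div_lt_iff₀ (norm_pos_iff.2 hu0)] at hm
  linarith [hmul m]

namespace Module.End

variable {K M : Type*} [Field K] [AddCommGroup M] [Module K M]

theorem maxGenEigenspace_zero_eq_ker {f : End K M} (h : ∀ x, f (f x) = 0 → f x = 0) :
    f.maxGenEigenspace 0 = LinearMap.ker f := by
  have hpow : ∀ (k : ℕ) (x : M), (f ^ k) x = 0 → f x = 0 := by
    intro k
    induction k with
    | zero => intro x hx; simp_all
    | succ k ih => intro x hx; exact h x (ih (f x) hx)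
  ext x
  simp only [mem_maxGenEigenspace, zero_smul, sub_zero, LinearMap.mem_ker]
  exact ⟨fun ⟨k, hk⟩ => hpow k x hk, fun hx => ⟨1, by simpa using hx⟩⟩

theorem maxGenEigenspace_one_sub_one (f : End K M) :
    (1 - f).maxGenEigenspace 1 = f.maxGenEigenspace 0 := by
  rw [maxGenEigenspace_eq_maxGenEigenspace_zero, one_smul, sub_sub_cancel_left]
  ext x
  simp only [mem_maxGenEigenspace, zero_smul, sub_zero, ← neg_one_smul K f, smul_pow,
    LinearMap.smul_apply, smul_eq_zero, pow_eq_zero_iff', neg_eq_zero, one_ne_zero, false_and,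
    false_or]

end Module.End

theorem Matrix.count_roots_charpoly {n K : Type*} [Fintype n] [DecidableEq n] [Field K]
    [DecidableEq K] (A : Matrix n n K) (μ : K) :
    A.charpoly.roots.count μ = Module.finrank K (Module.End.maxGenEigenspace A.mulVecLin μ) := by
  rw [Polynomial.count_roots, ← Matrix.charpoly_mulVecLin, LinearMap.finrank_maxGenEigenspace_eq]

section Laplacian

variable {V : Type*} [Fintype V] [DecidableEq V] {w : V → V → ℝ}

-- Vertices of in-degree zero get identity rows, so that `lap w = 1 - transMat w` on every row.
noncomputable def transMat (w : V → V → ℝ) : Matrix V V ℝ :=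
  of fun i j => if din w i = 0 then (1 : Matrix V V ℝ) i j else w i j / din w i

theorem lap_eq_one_sub_transMat (w : V → V → ℝ) :
    lap w = 1 - (transMat w).map Complex.ofReal := by
  ext i j
  by_cases hij : i = j
  · subst hij
    by_cases h : din w i = 0 <;> simp [lap, transMat, h]
  · by_cases h : din w i = 0 <;> simp [lap, transMat, h, hij]

theorem lap_mulVec (w : V → V → ℝ) (v : V → ℂ) :
    lap w *ᵥ v = v - (transMat w).map Complex.ofReal *ᵥ v := by
  rw [lap_eq_one_sub_transMat, sub_mulVec, one_mulVec]

theorem transMat_mem_rowStochastic (hpos : ∀ i j, 0 ≤ w i j) :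
    transMat w ∈ rowStochastic ℝ V := by
  refine mem_rowStochastic_iff_sum.2 ⟨fun i j => ?_, fun i => ?_⟩
  · by_cases h : din w i = 0
    · simp [transMat, h, one_apply, apply_ite]
    · simp only [transMat, of_apply, h, if_false]
      exact div_nonneg (hpos i j) (sum_nonneg fun j _ => hpos i j)
  · by_cases h : din w i = 0
    · simp [transMat, h, one_apply]
    · simp only [transMat, of_apply, h, if_false]
      rw [← sum_div, ← din, div_self h]

theorem transMat_ne_zero (hpos : ∀ i j, 0 ≤ w i j) {i j : V} (h : w i j ≠ 0) :
    transMat w i j ≠ 0 := by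
  have hdin : din w i ≠ 0 := fun h0 =>
    h ((sum_eq_zero_iff_of_nonneg fun j _ => hpos i j).1 h0 j (mem_univ j))
  simpa [transMat, hdin] using h

theorem eq_or_ne_zero_of_transMat_ne_zero {i j : V} (h : transMat w i j ≠ 0) :
    j = i ∨ w i j ≠ 0 := by
  by_cases hdin : din w i = 0
  · simp only [transMat, of_apply, hdin, if_true, one_apply, ne_eq, ite_eq_right_iff,
      one_ne_zero, imp_false, not_not] at h
    exact Or.inl h.symm
  · simp only [transMat, of_apply, hdin, if_false, ne_eq, div_eq_zero_iff, not_or] at h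
    exact Or.inr h.1

/-- Maximum principle. Where `‖v‖` is maximal and `v` is harmonic, `v` takes the same value at all
in-neighbours, so the set where `v` takes this value contains an isolated strongly connected
component. -/
theorem eq_zero_of_lap_mulVec (hpos : ∀ i j, 0 ≤ w i j) {v : V → ℂ}
    (hharm : ∀ i, v i ≠ 0 → (lap w *ᵥ v) i = 0)
    (hzero : ∀ S ∈ isolatedSCCs w, ∃ s ∈ S, v s = 0) : v = 0 := by
  by_contra hv
  obtain ⟨i, hi⟩ := Function.ne_iff.1 hv
  have : Nonempty V := ⟨i⟩
  obtain ⟨i₀, hmax⟩ := Finite.exists_max fun j => ‖v j‖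
  have hv₀ : v i₀ ≠ 0 := norm_pos_iff.1 ((norm_pos_iff.2 hi).trans_le (hmax i))
  have hclosed : ∀ b ∈ {j | v j = v i₀}, ∀ a, w b a ≠ 0 → a ∈ {j | v j = v i₀} := by
    intro b (hb : v b = v i₀) a hba
    have hfix : ((transMat w).map Complex.ofReal *ᵥ v) b = v b := by
      have := hharm b (hb ▸ hv₀)
      rwa [lap_mulVec, Pi.sub_apply, sub_eq_zero, eq_comm] at this
    show v a = v i₀
    rw [← hb]
    exact eq_of_mulVec_map_ofReal_apply_eq (transMat_mem_rowStochastic hpos)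
      (fun k => hb ▸ hmax k) hfix (transMat_ne_zero hpos hba)
  obtain ⟨S, hS, hSi₀⟩ := exists_isolatedSCC_reaches (w := w) i₀
  obtain ⟨s, hs, hvs⟩ := hzero S hS
  have hs₀ : v s = v i₀ := (hSi₀ s hs).mem_of_closed hclosed rfl
  exact hv₀ (hvs ▸ hs₀).symm

end Laplacian

section Kernel

variable {V : Type*} [Fintype V] [DecidableEq V] {w : V → V → ℝ}

theorem lap_mulVec_eq_zero_of_lap_mulVec_lap_mulVec_eq_zero (hpos : ∀ i j, 0 ≤ w i j)
    {x : V → ℂ} (h : lap w *ᵥ (lap w *ᵥ x) = 0) : lap w *ᵥ x = 0 := by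
  set Pc := (transMat w).map Complex.ofReal
  have hPu : Pc *ᵥ (lap w *ᵥ x) = lap w *ᵥ x := by
    rwa [lap_mulVec w (lap w *ᵥ x), sub_eq_zero, eq_comm] at h
  have hPx : Pc *ᵥ x = x - lap w *ᵥ x := by rw [lap_mulVec, sub_sub_cancel]
  exact eq_zero_of_map_eq_self_of_map_eq_sub Pc.mulVecLin.toAddMonoidHom
    (norm_mulVec_map_ofReal_le (transMat_mem_rowStochastic hpos)) hPu hPx

/-- Dirichlet problem: `v ↦ (v on U, Δv off U)` is injective by the maximum principle, hence
surjective. -/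
theorem exists_eqOn_and_lap_mulVec_eq_zero (hpos : ∀ i j, 0 ≤ w i j) {U : Set V}
    (hU : ∀ S ∈ isolatedSCCs w, ∃ s ∈ S, s ∈ U) (g : V → ℂ) :
    ∃ v : V → ℂ, Set.EqOn v g U ∧ ∀ i ∉ U, (lap w *ᵥ v) i = 0 := by
  classical
  let L : (V → ℂ) →ₗ[ℂ] V → ℂ := LinearMap.pi fun i =>
    if i ∈ U then LinearMap.proj i else LinearMap.proj i ∘ₗ (lap w).mulVecLin
  have hL : ∀ v i, L v i = if i ∈ U then v i else (lap w *ᵥ v) i := by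
    intro v i
    by_cases hi : i ∈ U <;> simp [L, hi]
  have hinj : Function.Injective L := by
    refine (injective_iff_map_eq_zero L).2 fun v hv => eq_zero_of_lap_mulVec hpos ?_ ?_
    · intro i hvi
      have hi : i ∉ U := fun hi => hvi (by simpa [hL, hi] using congrFun hv i)
      simpa [hL, hi] using congrFun hv i
    · intro S hS
      obtain ⟨s, hsS, hsU⟩ := hU S hS
      exact ⟨s, hsS, by simpa [hL, hsU] using congrFun hv s⟩
  obtain ⟨v, hv⟩ := LinearMap.injective_iff_surjective.1 hinj fun i => if i ∈ U then g i else 0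
  exact ⟨v, fun i hi => by simpa [hL, hi] using congrFun hv i,
    fun i hi => by simpa [hL, hi] using congrFun hv i⟩

theorem exists_lap_mulVec_eq_zero (hpos : ∀ i j, 0 ≤ w i j) (c : isolatedSCCs w → ℂ) :
    ∃ v : V → ℂ, lap w *ᵥ v = 0 ∧ ∀ T : isolatedSCCs w, ∀ i ∈ (T : Finset V), v i = c T := by
  classical
  let U : Set V := {i | sccOf w i ∈ isolatedSCCs w}
  let g : V → ℂ := fun i => if h : i ∈ U then c ⟨sccOf w i, h⟩ else 0
  have hgT : ∀ T : isolatedSCCs w, ∀ i ∈ (T : Finset V), ∃ hi : i ∈ U, ⟨sccOf w i, hi⟩ = T :=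
    fun T i hi => by
      have hT := T.2.1.sccOf_eq hi
      exact ⟨show sccOf w i ∈ isolatedSCCs w from hT ▸ T.2, Subtype.ext hT⟩
  have hU : ∀ S ∈ isolatedSCCs w, ∃ s ∈ S, s ∈ U := fun S hS => by
    obtain ⟨s, hs⟩ := hS.1.1
    exact ⟨s, hs, (hgT ⟨S, hS⟩ s hs).1⟩
  obtain ⟨v, hvU, hvharm⟩ := exists_eqOn_and_lap_mulVec_eq_zero hpos hU g
  have hvT : ∀ T : isolatedSCCs w, ∀ i ∈ (T : Finset V), v i = c T := fun T i hi => by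
    obtain ⟨hiU, hiT⟩ := hgT T i hi
    rw [hvU hiU, ← hiT]
    exact dif_pos hiU
  refine ⟨v, funext fun i => ?_, hvT⟩
  by_cases hiU : i ∈ U
  · let T : isolatedSCCs w := ⟨sccOf w i, hiU⟩
    have hPv : ((transMat w).map Complex.ofReal *ᵥ v) i = c T := by
      refine mulVec_map_ofReal_apply_eq (transMat_mem_rowStochastic hpos) fun j hj => hvT T j ?_
      rcases eq_or_ne_zero_of_transMat_ne_zero hj with rfl | hij
      · exact mem_sccOf_self j
      · exact by_contra fun hjT => hij (T.2.2 i (mem_sccOf_self i) j hjT)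
    rw [lap_mulVec, Pi.sub_apply, hPv, hvT T i (mem_sccOf_self i), sub_self, Pi.zero_apply]
  · exact hvharm i hiU

theorem finrank_ker_lap (hpos : ∀ i j, 0 ≤ w i j) :
    Module.finrank ℂ (LinearMap.ker (lap w).mulVecLin) = (isolatedSCCs w).ncard := by
  classical
  let ev : LinearMap.ker (lap w).mulVecLin →ₗ[ℂ] isolatedSCCs w → ℂ :=
    LinearMap.pi fun T => LinearMap.proj (sccRep T) ∘ₗ (LinearMap.ker _).subtype
  have hinj : Function.Injective ev := by
    refine (injective_iff_map_eq_zero ev).2 fun v hv => Subtype.ext ?_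
    refine eq_zero_of_lap_mulVec hpos (fun i _ => congrFun v.2 i) fun S hS => ?_
    exact ⟨sccRep ⟨S, hS⟩, sccRep_mem ⟨S, hS⟩, congrFun hv ⟨S, hS⟩⟩
  have hsurj : Function.Surjective ev := fun c => by
    obtain ⟨v, hv, hvc⟩ := exists_lap_mulVec_eq_zero hpos c
    exact ⟨⟨v, hv⟩, funext fun T => hvc T _ (sccRep_mem T)⟩
  rw [(LinearEquiv.ofBijective ev ⟨hinj, hsurj⟩).finrank_eq, Module.finrank_fintype_fun_eq_card,
    ← Nat.card_eq_fintype_card, Nat.card_coe_set_eq]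

end Kernel

theorem multiplicity_zero_tfae_general {V : Type*} [Fintype V] [DecidableEq V]
    (w : V → V → ℝ) (hpos : ∀ i j, 0 ≤ w i j)
    (k : ℕ) :
    ((((1 : Matrix V V ℂ) - lap w).charpoly.roots.count 1 = k ↔
        ((lap w).charpoly.roots.count 0 = k)) ∧
     (((lap w).charpoly.roots.count 0 = k) ↔
        {S : Finset V | IsSCC w S ∧ IsolatedF w S}.ncard = k) ∧
     (((lap w).charpoly.roots.count 0 = k) ↔
        IsLeast {m : ℕ | ∃ R : Finset V, R.card = m ∧ ∀ i, ∃ rt ∈ R, reaches w rt i} k)) := by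
  have hzero : (lap w).charpoly.roots.count 0 = (isolatedSCCs w).ncard := by
    rw [count_roots_charpoly, Module.End.maxGenEigenspace_zero_eq_ker
      fun x => lap_mulVec_eq_zero_of_lap_mulVec_lap_mulVec_eq_zero hpos, finrank_ker_lap hpos]
  have hone : ((1 : Matrix V V ℂ) - lap w).charpoly.roots.count 1 =
      (lap w).charpoly.roots.count 0 := by
    have hlin : ((1 : Matrix V V ℂ) - lap w).mulVecLin = 1 - (lap w).mulVecLin :=
      LinearMap.ext fun x => by simp
    rw [count_roots_charpoly, count_roots_charpoly, hlin, Module.End.maxGenEigenspace_one_sub_one]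
  refine ⟨by rw [hone], by rw [hzero]; rfl, ?_⟩
  rw [hzero]
  exact ⟨fun h => h ▸ isLeast_ncard_isolatedSCCs w, (isLeast_ncard_isolatedSCCs w).unique⟩

/-- for a graph with nonnegative weights, the following are equivalent:
(i) the algebraic multiplicity of the eigenvalue `1` of `P = I - Δ` equals `k`;
(ii) the algebraic multiplicity of the eigenvalue `0` of `Δ` equals `k`;
(iii) there are exactly `k` isolated strongly connected components;
(iv) the minimum number of directed trees needed to span the graph (the minimum
cardinality of a set `R` of roots from which every vertex is reachable) equals `k`. -/
theorem multiplicity_zero_tfae {V : Type*} [Fintype V] [DecidableEq V] [Nonempty V]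
    (w : V → V → ℝ) (hloop : ∀ i, w i i = 0) (hpos : ∀ i j, 0 ≤ w i j)
    (k : ℕ) (hk : 0 < k) :
    ((((1 : Matrix V V ℂ) - lap w).charpoly.roots.count 1 = k ↔
        ((lap w).charpoly.roots.count 0 = k)) ∧
     (((lap w).charpoly.roots.count 0 = k) ↔
        {S : Finset V | IsSCC w S ∧ IsolatedF w S}.ncard = k) ∧
     (((lap w).charpoly.roots.count 0 = k) ↔
        IsLeast {m : ℕ | ∃ R : Finset V, R.card = m ∧ ∀ i, ∃ rt ∈ R, reaches w rt i} k)) :=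
  multiplicity_zero_tfae_general w hpos k
end

section
/- Let Γ be a directed acyclic graph on a finite nonempty vertex set V, i.e., a weighted directed graph containing no directed cycle. Then every eigenvalue of the normalized Laplace operator Δ lies in {0, 1}; moreover, the algebraic multiplicity of the eigenvalue 0 equals |V∖V_R| (the number of quasi-isolated vertices) and the algebraic multiplicity of the eigenvalue 1 equals |V_R|. -/
/-- `Γ` has a directed cycle: a sequence `v_0, v_1, …, v_m = v_0` with `m ≥ 2` and
`w_{v_{t+1} v_t} ≠ 0` for all `0 ≤ t < m`. -/
def HasDirCycle {V : Type*} (w : V → V → ℝ) : Prop :=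
  ∃ (m : ℕ) (v : ℕ → V), 2 ≤ m ∧ v m = v 0 ∧ ∀ t < m, w (v (t + 1)) (v t) ≠ 0

/-!
Orient each edge `j → i` (`w i j ≠ 0`) as `i ≤ j`. Without directed cycles this relation generates
a partial order, which extends to a linear order of the vertices. In that order every off-diagonal
entry of `Δ` below the diagonal vanishes, so `Δ` is upper triangular and its eigenvalues are its
diagonal entries: `0` at a quasi-isolated vertex and `1 - w_ii / d_i^in = 1` elsewhere.
-/

open Polynomial Relation Finset

theorem exists_linearOrder_of_not_transGen_self {α : Type*} {r : α → α → Prop}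
    (h : ∀ a, ¬ TransGen r a a) : ∃ _ : LinearOrder α, ∀ a b, r a b → a ≤ b := by
  let : PartialOrder α :=
    { le := ReflTransGen r
      le_refl := fun _ => .refl
      le_trans := fun _ _ _ => ReflTransGen.trans
      le_antisymm := fun a b hab hba => by
        rcases reflTransGen_iff_eq_or_transGen.mp hab with rfl | hab
        · rfl
        · exact absurd (hab.trans_left hba) (h a) }
  exact ⟨LinearOrder.lift' (toLinearExtension (α := α)) fun _ _ => id,
    fun _ _ hab => toLinearExtension.monotone (ReflTransGen.single hab)⟩

section Digraph

variable {V : Type*} (w : V → V → ℝ)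

theorem exists_dirWalk_of_transGen {a b : V} (h : TransGen (fun i j => w i j ≠ 0) a b) :
    ∃ m, 1 ≤ m ∧ ∃ v : ℕ → V, v 0 = b ∧ v m = a ∧ ∀ t < m, w (v (t + 1)) (v t) ≠ 0 := by
  induction h with
  | @single b hab =>
    refine ⟨1, le_rfl, fun t => if t = 0 then b else a, by simp, by simp, ?_⟩
    intro t ht
    obtain rfl : t = 0 := by omega
    simpa using hab
  | @tail b c _ hbc ih =>
    obtain ⟨m, hm, v, hv0, hvm, hstep⟩ := ih
    refine ⟨m + 1, by omega, fun t => if t = 0 then c else v (t - 1), by simp, by simpa, ?_⟩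
    rintro (_ | t) ht
    · simpa [hv0] using hbc
    · simpa using hstep t (by omega)

theorem not_transGen_self_of_not_hasDirCycle (hloop : ∀ i, w i i = 0) (hac : ¬ HasDirCycle w)
    (a : V) : ¬ TransGen (fun i j => w i j ≠ 0) a a := by
  intro ha
  obtain ⟨m, hm, v, hv0, hvm, hstep⟩ := exists_dirWalk_of_transGen w ha
  rcases hm.eq_or_lt with rfl | hm
  · exact hstep 0 one_pos (by rw [hvm, hv0, hloop])
  · exact hac ⟨m, v, hm, hvm.trans hv0.symm, hstep⟩

variable [Fintype V] [DecidableEq V]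

theorem lap_apply_self (hloop : ∀ i, w i i = 0) (i : V) :
    lap w i i = if din w i = 0 then 0 else 1 := by
  by_cases h : din w i = 0 <;> simp [lap, hloop i, h]

theorem lap_apply_of_ne {i j : V} (hij : i ≠ j) (hw : w i j = 0) : lap w i j = 0 := by
  simp [lap, hij, hw]

theorem specL_eq_map (hloop : ∀ i, w i i = 0) (hac : ¬ HasDirCycle w) :
    specL w = univ.val.map fun i => if din w i = 0 then 0 else 1 := by
  obtain ⟨_, hle⟩ := exists_linearOrder_of_not_transGen_self
    (not_transGen_self_of_not_hasDirCycle w hloop hac)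
  have htri : (lap w).IsUpperTriangular := fun i j hji =>
    lap_apply_of_ne w hji.ne' (not_not.mp fun hw => hji.not_ge (hle i j hw))
  simp only [specL, Matrix.charpoly_of_isUpperTriangular _ htri, lap_apply_self w hloop,
    Finset.prod_eq_multiset_prod]
  simpa only [Multiset.map_map, Function.comp_def] using
    roots_multiset_prod_X_sub_C (univ.val.map fun i => if din w i = 0 then (0 : ℂ) else 1)

end Digraph

theorem count_map_ite_zero_one {ι R : Type*} [Fintype ι] [Zero R] [One R] [NeZero (1 : R)]
    [DecidableEq R] (p : ι → Prop) [DecidablePred p] :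
    (univ.val.map fun i => if p i then (0 : R) else 1).count 0 = #{i | p i} ∧
    (univ.val.map fun i => if p i then (0 : R) else 1).count 1 = #{i | ¬ p i} := by
  simp only [Multiset.count_map, Finset.card_def, Finset.filter_val]
  constructor <;> congr 1 <;> apply Multiset.filter_congr <;> intro i _ <;> by_cases h : p i <;>
    simp [h]

theorem dag_spec_zero_one_general {V : Type*} [Fintype V] [DecidableEq V]
    (w : V → V → ℝ) (hloop : ∀ i, w i i = 0) (hac : ¬ HasDirCycle w) :
    (∀ lam ∈ specL w, lam = 0 ∨ lam = 1) ∧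
    (specL w).count 0 = (Finset.univ.filter fun i => din w i = 0).card ∧
    (specL w).count 1 = (Finset.univ.filter fun i => din w i ≠ 0).card := by
  rw [specL_eq_map w hloop hac]
  refine ⟨?_, count_map_ite_zero_one _⟩
  simp only [Multiset.mem_map, forall_exists_index, and_imp]
  rintro _ i - rfl
  split_ifs <;> simp

/-- for a directed acyclic graph, `spec(Δ) ⊆ {0, 1}`; the algebraic
multiplicity of the eigenvalue `0` equals the number of quasi-isolated vertices
`|V ∖ V_R|`, and the multiplicity of the eigenvalue `1` equals `|V_R|`. -/
theorem dag_spec_zero_one {V : Type*} [Fintype V] [DecidableEq V] [Nonempty V]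
    (w : V → V → ℝ) (hloop : ∀ i, w i i = 0) (hac : ¬ HasDirCycle w) :
    (∀ lam ∈ specL w, lam = 0 ∨ lam = 1) ∧
    (specL w).count 0 = (Finset.univ.filter fun i => din w i = 0).card ∧
    (specL w).count 1 = (Finset.univ.filter fun i => din w i ≠ 0).card :=
  dag_spec_zero_one_general w hloop hac
end

section
/- Let Γ be a weighted directed graph on a finite nonempty vertex set V with nonnegative weights (w_{ij} ≥ 0 for all i,j). Then every eigenvalue of the normalized Laplace operator Δ lies in {0, 1} if and only if Γ is a directed acyclic graph (contains no directed cycle). -/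
open Matrix Polynomial

namespace Matrix

variable {n R : Type*} [Fintype n] [DecidableEq n]

theorem pow_apply_pos_iff_exists_walk [Semiring R] [LinearOrder R] [IsStrictOrderedRing R]
    {K : Matrix n n R} (hK : ∀ i j, 0 ≤ K i j) (k : ℕ) (i j : n) :
    0 < (K ^ k) i j ↔ ∃ v : ℕ → n, v 0 = j ∧ v k = i ∧ ∀ t < k, 0 < K (v (t + 1)) (v t) := by
  induction k generalizing i with
  | zero =>
    refine ⟨fun h => ⟨fun _ => j, rfl, ?_, by simp⟩, fun ⟨v, hv0, hvk, _⟩ => ?_⟩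
    · by_contra hij
      simp [Ne.symm hij] at h
    · simp [← hv0, ← hvk]
  | succ k ih =>
    rw [pow_succ', mul_apply, Finset.sum_pos_iff_of_nonneg
      fun l _ => mul_nonneg (hK i l) (pow_apply_nonneg hK k l j)]
    constructor
    · rintro ⟨l, -, hl⟩
      obtain ⟨v, hv0, hvk, hstep⟩ := (ih l).1 (pos_of_mul_pos_right hl (hK i l))
      refine ⟨Function.update v (k + 1) i, by simp [hv0], by simp, fun t ht => ?_⟩
      rcases Nat.lt_succ_iff_lt_or_eq.1 ht with ht | rfl
      · simpa [Function.update_of_ne (show t + 1 ≠ k + 1 by omega),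
          Function.update_of_ne (show t ≠ k + 1 by omega)] using hstep t ht
      · simpa [hvk] using pos_of_mul_pos_left hl (pow_apply_nonneg hK t l j)
    · rintro ⟨v, hv0, hvk, hstep⟩
      refine ⟨v k, Finset.mem_univ _, mul_pos (hvk ▸ hstep k k.lt_succ_self) ?_⟩
      exact (ih (v k)).2 ⟨v, hv0, rfl, fun t ht => hstep t (by omega)⟩

theorem pow_apply_self_pos [Semiring R] [PartialOrder R] [IsStrictOrderedRing R]
    {A : Matrix n n R} (hA : ∀ i j, 0 ≤ A i j) {i : n} (hi : 0 < A i i) (k : ℕ) :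
    0 < (A ^ k) i i := by
  induction k with
  | zero => simp
  | succ k ih =>
    rw [pow_succ, mul_apply]
    exact (mul_pos ih hi).trans_le <| Finset.single_le_sum
      (fun l _ => mul_nonneg (pow_apply_nonneg hA k i l) (hA l i)) (Finset.mem_univ i)

theorem not_isNilpotent_of_pow_apply_self_pos [Semiring R] [PartialOrder R]
    [IsStrictOrderedRing R] {A : Matrix n n R} (hA : ∀ i j, 0 ≤ A i j) {m : ℕ} (hm : m ≠ 0)
    {i : n} (hi : 0 < (A ^ m) i i) : ¬ IsNilpotent A := by
  rintro ⟨N, hN⟩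
  have := pow_apply_self_pos (pow_apply_nonneg hA m) hi N
  rw [← pow_mul, mul_comm, pow_mul, hN, zero_pow hm] at this
  exact this.false

end Matrix

theorem Fintype.exists_lt_le_card_apply_eq {n : Type*} [Fintype n] (v : ℕ → n) :
    ∃ a b, a < b ∧ b ≤ Fintype.card n ∧ v a = v b := by
  obtain ⟨a, ha, b, hb, hab, hv⟩ := Finset.exists_ne_map_eq_of_card_lt_of_maps_to
    (s := Finset.range (Fintype.card n + 1)) (t := (Finset.univ : Finset n)) (by simp)
    (fun _ _ => Finset.mem_coe.2 (Finset.mem_univ _))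
  rw [Finset.mem_range] at ha hb
  rcases hab.lt_or_gt with h | h
  · exact ⟨a, b, h, by omega, hv⟩
  · exact ⟨b, a, h, by omega, hv.symm⟩

theorem hasDirCycle_of_walk {V : Type*} {w : V → V → ℝ} (hloop : ∀ i, w i i = 0) (v : ℕ → V)
    {a b : ℕ} (hab : a < b) (hv : v a = v b) (hstep : ∀ t < b, w (v (t + 1)) (v t) ≠ 0) :
    HasDirCycle w := by
  refine ⟨b - a, fun r => v (a + r), ?_, by simp [hv, Nat.add_sub_cancel' hab.le],
    fun r hr => by simpa [add_assoc] using hstep (a + r) (by omega)⟩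
  by_contra! h
  have hb : a + 1 = b := by omega
  exact hstep a (by omega) (by rw [hb, ← hv, hloop])

theorem Module.End.eigenspace_sub_of_isIdempotentElem {K M : Type*} [Field K] [AddCommGroup M]
    [Module K M] {p f : Module.End K M} (hp : IsIdempotentElem p) (hpf : p * f = f) {μ : K}
    (hμ0 : μ ≠ 0) (hμ1 : μ ≠ 1) : (p - f).eigenspace μ = f.eigenspace (1 - μ) := by
  have hfix : ∀ x, f x = (1 - μ) • x → p x = x := by
    intro x hx
    have : (1 - μ) • p x = (1 - μ) • x := by
      rw [← map_smul, ← hx, ← Module.End.mul_apply, hpf]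
    exact smul_right_injective M (sub_ne_zero.2 hμ1.symm) this
  ext x
  simp only [Module.End.mem_eigenspace_iff, LinearMap.sub_apply]
  constructor
  · intro hx
    have hpx : p x = x := by
      have : μ • p x = μ • x := by
        rw [← map_smul, ← hx, map_sub, ← Module.End.mul_apply, ← Module.End.mul_apply, hp.eq,
          hpf]
      exact smul_right_injective M hμ0 this
    rw [sub_smul, one_smul, ← hx, hpx, sub_sub_cancel]
  · intro hx
    rw [hfix x hx, hx, sub_smul, one_smul, sub_sub_cancel]

theorem Multiset.sum_eq_zero_iff_of_nonneg {α : Type*} [AddCommMonoid α] [PartialOrder α]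
    [IsOrderedAddMonoid α] {s : Multiset α} (hs : ∀ x ∈ s, 0 ≤ x) :
    s.sum = 0 ↔ ∀ x ∈ s, x = 0 := by
  induction s using Multiset.induction_on with
  | empty => simp
  | cons a s ih =>
    rw [Multiset.forall_mem_cons] at hs
    rw [Multiset.sum_cons, add_eq_zero_iff_of_nonneg hs.1 (Multiset.sum_nonneg hs.2),
      ih hs.2, Multiset.forall_mem_cons]

theorem Polynomial.Splits.eq_X_pow_of_forall_mem_roots_eq_zero {K : Type*} [Field K]
    {f : K[X]} (hf : f.Splits) (hm : f.Monic) (h : ∀ a ∈ f.roots, a = 0) :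
    f = X ^ f.natDegree := by
  conv_lhs => rw [hf.eq_prod_roots_of_monic hm, Multiset.eq_replicate_of_mem h]
  simp [splits_iff_card_roots.1 hf]

namespace Matrix

variable {n K : Type*} [Fintype n] [DecidableEq n] [Field K]

theorem mem_roots_charpoly_iff_hasEigenvalue (M : Matrix n n K) (μ : K) :
    μ ∈ M.charpoly.roots ↔ Module.End.HasEigenvalue (toLin' M) μ := by
  rw [mem_roots M.charpoly_monic.ne_zero, Module.End.hasEigenvalue_iff_isRoot_charpoly,
    charpoly_toLin']

theorem eq_zero_of_mem_roots_charpoly {M : Matrix n n K} (hM : IsNilpotent M) {μ : K}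
    (hμ : μ ∈ M.charpoly.roots) : μ = 0 :=
  (((mem_roots_charpoly_iff_hasEigenvalue M μ).1 hμ).isNilpotent_of_isNilpotent
    (hM.map toLinAlgEquiv')).eq_zero

theorem isNilpotent_of_forall_mem_roots_charpoly_eq_zero [IsAlgClosed K] {M : Matrix n n K}
    (h : ∀ μ ∈ M.charpoly.roots, μ = 0) : IsNilpotent M := by
  refine ⟨Fintype.card n, ?_⟩
  have hX := (IsAlgClosed.splits M.charpoly).eq_X_pow_of_forall_mem_roots_eq_zero
    M.charpoly_monic h
  have hCH := M.aeval_self_charpoly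
  rwa [hX, charpoly_natDegree_eq_dim, map_pow, aeval_X] at hCH

open scoped ComplexOrder in
theorem isNilpotent_of_trace_eq_zero_of_roots_charpoly_zero_one {M : Matrix n n ℂ}
    (h : ∀ μ ∈ M.charpoly.roots, μ = 0 ∨ μ = 1) (htr : M.trace = 0) : IsNilpotent M := by
  have hnonneg : ∀ μ ∈ M.charpoly.roots, 0 ≤ μ := fun μ hμ => by
    rcases h μ hμ with rfl | rfl <;> norm_num
  refine isNilpotent_of_forall_mem_roots_charpoly_eq_zero ?_
  rwa [← Multiset.sum_eq_zero_iff_of_nonneg hnonneg, ← trace_eq_sum_roots_charpoly]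

end Matrix

noncomputable def walkMatrix {V : Type*} [Fintype V] (w : V → V → ℝ) : Matrix V V ℝ :=
  of fun i j => if din w i = 0 then 0 else w i j / din w i

section WalkMatrix

variable {V : Type*} [Fintype V] {w : V → V → ℝ}

theorem walkMatrix_nonneg (hpos : ∀ i j, 0 ≤ w i j) (i j : V) : 0 ≤ walkMatrix w i j := by
  rw [walkMatrix, of_apply]
  split_ifs
  · exact le_rfl
  · exact div_nonneg (hpos i j) (Finset.sum_nonneg fun j _ => hpos i j)

theorem walkMatrix_pos_iff (hpos : ∀ i j, 0 ≤ w i j) {i j : V} :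
    0 < walkMatrix w i j ↔ w i j ≠ 0 := by
  have hdin : 0 ≤ din w i := Finset.sum_nonneg fun j _ => hpos i j
  rw [walkMatrix, of_apply]
  split_ifs with h
  · have : w i j ≤ din w i := Finset.single_le_sum (fun k _ => hpos i k) (Finset.mem_univ j)
    simp only [lt_self_iff_false, false_iff, not_not]
    linarith [hpos i j]
  · rw [div_pos_iff_of_pos_right (hdin.lt_of_ne' h)]
    exact (hpos i j).lt_iff_ne'

theorem walkMatrix_apply_self (hloop : ∀ i, w i i = 0) (i : V) : walkMatrix w i i = 0 := by
  simp [walkMatrix, hloop]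

theorem not_hasDirCycle_iff_isNilpotent [DecidableEq V] (hloop : ∀ i, w i i = 0)
    (hpos : ∀ i j, 0 ≤ w i j) : ¬ HasDirCycle w ↔ IsNilpotent (walkMatrix w) := by
  have hwalk := pow_apply_pos_iff_exists_walk (walkMatrix_nonneg hpos)
  simp only [walkMatrix_pos_iff hpos] at hwalk
  constructor
  · intro hacyclic
    refine ⟨Fintype.card V, Matrix.ext fun i j => ?_⟩
    by_contra h
    obtain ⟨v, -, -, hstep⟩ := (hwalk _ i j).1 <|
      (pow_apply_nonneg (walkMatrix_nonneg hpos) _ i j).lt_of_ne' h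
    obtain ⟨a, b, hab, hb, hv⟩ := Fintype.exists_lt_le_card_apply_eq v
    exact hacyclic (hasDirCycle_of_walk hloop v hab hv fun t ht => hstep t (by omega))
  · rintro hnil ⟨m, v, hm, hvm, hstep⟩
    have hpow : 0 < (walkMatrix w ^ m) (v 0) (v 0) := by
      simpa [hvm] using (hwalk m (v m) (v 0)).2 ⟨v, rfl, rfl, hstep⟩
    exact not_isNilpotent_of_pow_apply_self_pos (walkMatrix_nonneg hpos) (by omega) hpow hnil

end WalkMatrix

theorem mem_specL_iff {V : Type*} [Fintype V] [DecidableEq V] (w : V → V → ℝ) {μ : ℂ}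
    (hμ0 : μ ≠ 0) (hμ1 : μ ≠ 1) :
    μ ∈ specL w ↔ 1 - μ ∈ ((walkMatrix w).map Complex.ofReal).charpoly.roots := by
  set P : Matrix V V ℂ := diagonal fun i => if din w i = 0 then 0 else 1
  set Kc := (walkMatrix w).map Complex.ofReal
  have hlap : lap w = P - Kc := by
    ext i j
    by_cases h : din w i = 0
    · simp [lap, P, Kc, walkMatrix, h, diagonal_apply]
    · rcases eq_or_ne i j with rfl | hij
      · simp [lap, P, Kc, walkMatrix, h]
      · simp [lap, P, Kc, walkMatrix, h, hij]
  have hP : IsIdempotentElem (toLin' P) := by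
    refine IsIdempotentElem.map (f := toLinAlgEquiv') ?_
    rw [IsIdempotentElem, diagonal_mul_diagonal]
    congr 1
    ext i
    split_ifs <;> simp
  have hPK : toLin' P * toLin' Kc = toLin' Kc := by
    change toLinAlgEquiv' P * toLinAlgEquiv' Kc = toLinAlgEquiv' Kc
    rw [← map_mul]
    congr 1
    ext i j
    by_cases h : din w i = 0 <;> simp [P, Kc, walkMatrix, h]
  rw [specL, mem_roots_charpoly_iff_hasEigenvalue, mem_roots_charpoly_iff_hasEigenvalue,
    Module.End.hasEigenvalue_iff, Module.End.hasEigenvalue_iff, hlap, map_sub,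
    Module.End.eigenspace_sub_of_isIdempotentElem hP hPK hμ0 hμ1]

theorem spec_zero_one_iff_dag_general {V : Type*} [Fintype V] [DecidableEq V]
    (w : V → V → ℝ) (hloop : ∀ i, w i i = 0) (hpos : ∀ i j, 0 ≤ w i j) :
    (∀ lam ∈ specL w, lam = 0 ∨ lam = 1) ↔ ¬ HasDirCycle w := by
  have hnil : IsNilpotent (walkMatrix w) ↔ IsNilpotent ((walkMatrix w).map Complex.ofReal) :=
    (IsNilpotent.map_iff (f := Complex.ofRealHom.mapMatrix)
      (map_injective Complex.ofReal_injective)).symm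
  rw [not_hasDirCycle_iff_isNilpotent hloop hpos, hnil]
  constructor
  · intro hspec
    refine isNilpotent_of_trace_eq_zero_of_roots_charpoly_zero_one (fun μ hμ => ?_) ?_
    · by_contra! h
      have := hspec (1 - μ) <| (mem_specL_iff w (sub_ne_zero.2 h.2.symm) (by simpa using h.1)).2
        (by simpa using hμ)
      grind
    · simp [trace, walkMatrix_apply_self hloop]
  · intro hK lam hlam
    by_contra! h
    exact sub_ne_zero.2 h.2.symm
      (eq_zero_of_mem_roots_charpoly hK ((mem_specL_iff w h.1 h.2).1 hlam))

/-- for a graph with nonnegative weights, every eigenvalue of the normalized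
Laplace operator lies in `{0, 1}` if and only if the graph is directed acyclic. -/
theorem spec_zero_one_iff_dag {V : Type*} [Fintype V] [DecidableEq V] [Nonempty V]
    (w : V → V → ℝ) (hloop : ∀ i, w i i = 0) (hpos : ∀ i j, 0 ≤ w i j) :
    (∀ lam ∈ specL w, lam = 0 ∨ lam = 1) ↔ ¬ HasDirCycle w :=
  spec_zero_one_iff_dag_general w hloop hpos
end

section
/- Let Γ be a weighted directed graph on a finite vertex set V. If at least k eigenvalues of the normalized Laplace operator Δ, counted with algebraic multiplicity, are not equal to 0 or 1, then Γ has at least k cyclic vertices, i.e., at least k vertices that lie on some directed cycle. -/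
/-- Vertex `i` is cyclic: it lies on a directed cycle, i.e. there is a sequence
`v_0, v_1, …, v_m = v_0` with `m ≥ 2`, `w_{v_{t+1} v_t} ≠ 0` for `t < m`, passing
through `i`. -/
def CyclicVertex {V : Type*} (w : V → V → ℝ) (i : V) : Prop :=
  ∃ (m : ℕ) (v : ℕ → V), 2 ≤ m ∧ v m = v 0 ∧ (∀ t < m, w (v (t + 1)) (v t) ≠ 0) ∧
    ∃ t ≤ m, v t = i


/-!
Order the vertices by the number of vertices they reach. A nonzero entry `Δ i j` with
`i ≠ j` comes from an arc `j → i`, so `i` reaches at most as many vertices as `j`, with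
equality only if `i` and `j` lie on a common cycle. After breaking ties among acyclic
vertices, `Δ` is therefore block triangular, and each diagonal block either consists of cyclic
vertices or is the `1 × 1` block `Δ i i ∈ {0, 1}` of an acyclic vertex (the graph is loopless).
A block of `s` cyclic vertices contributes at most `s` eigenvalues.
-/

open Finset Polynomial Relation

theorem Matrix.charpoly_of_unique {R n : Type*} [CommRing R] [Fintype n] [Unique n]
    [DecidableEq n] (A : Matrix n n R) : A.charpoly = X - C (A default default) := by
  rw [Matrix.charpoly, Matrix.det_unique, Matrix.charmatrix_apply_eq]

namespace Matrix.BlockTriangular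

variable {R n α : Type*} [CommRing R] [IsDomain R] [Fintype n] [DecidableEq n] [LinearOrder α]
  {A : Matrix n n R} {b : n → α}

theorem charpoly_roots (hA : A.BlockTriangular b) :
    A.charpoly.roots = (univ.image b).val.bind fun a => (A.toSquareBlock b a).charpoly.roots := by
  rw [hA.charpoly]
  exact roots_prod _ _ (prod_ne_zero_iff.mpr fun a _ => (charpoly_monic _).ne_zero)

theorem card_filter_charpoly_roots_le (hA : A.BlockTriangular b) (P : R → Prop)
    [DecidablePred P] (S : Finset n) (hS : ∀ i ∉ S, (∀ j, b j = b i → j = i) ∧ ¬ P (A i i)) :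
    (A.charpoly.roots.filter P).card ≤ #S := by
  rw [hA.charpoly_roots, Multiset.filter_bind, Multiset.card_bind,
    card_eq_sum_card_fiberwise fun i _ => mem_image_of_mem b (mem_univ i)]
  refine sum_le_sum fun a _ => ?_
  rw [Function.comp_apply]
  by_cases hfiber : ∀ i, b i = a → i ∈ S
  · calc ((A.toSquareBlock b a).charpoly.roots.filter P).card
        ≤ (A.toSquareBlock b a).charpoly.natDegree :=
          (Multiset.card_le_card (Multiset.filter_le _ _)).trans (card_roots' _)
      _ = #{i | b i = a} := by rw [charpoly_natDegree_eq_dim, Fintype.card_subtype]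
      _ = #{i ∈ S | b i = a} := by
          congr 1; ext i; simpa using fun hi => hfiber i hi
  · push Not at hfiber
    obtain ⟨i, rfl, hiS⟩ := hfiber
    obtain ⟨hsingle, hP⟩ := hS i hiS
    let : Unique {j // b j = b i} := ⟨⟨⟨i, rfl⟩⟩, fun j => Subtype.ext (hsingle j j.2)⟩
    rw [charpoly_of_unique, roots_X_sub_C]
    have hdefault : ((default : {j // b j = b i}) : n) = i := rfl
    simp [toSquareBlock_def, Multiset.filter_singleton, hdefault, hP]

end Matrix.BlockTriangular

theorem Relation.TransGen.exists_seq {α : Type*} {r : α → α → Prop} {a b : α}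
    (h : TransGen r a b) :
    ∃ m, 1 ≤ m ∧ ∃ v : ℕ → α, v 0 = a ∧ v m = b ∧ ∀ t < m, r (v t) (v (t + 1)) := by
  induction h with
  | single hab =>
    refine ⟨1, le_rfl, fun t => if t = 0 then a else _, rfl, rfl, fun t ht => ?_⟩
    obtain rfl : t = 0 := by omega
    simpa using hab
  | @tail c d _ hcd ih =>
    obtain ⟨m, hm, v, hv0, hvm, hv⟩ := ih
    refine ⟨m + 1, by omega, fun t => if t ≤ m then v t else d, by simp [hv0], by simp,
      fun t ht => ?_⟩
    rcases Nat.lt_or_ge t m with htm | htm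
    · simpa [htm.le, Nat.succ_le_of_lt htm] using hv t htm
    · obtain rfl : t = m := by omega
      simpa [hvm] using hcd

section Reachability

variable {V : Type*} (w : V → V → ℝ)

def Arc (i j : V) : Prop := w j i ≠ 0

variable {w}

theorem cyclicVertex_of_transGen (hloop : ∀ i, w i i = 0) {i : V}
    (h : TransGen (Arc w) i i) : CyclicVertex w i := by
  obtain ⟨m, hm, v, hv0, hvm, hv⟩ := h.exists_seq
  refine ⟨m, v, ?_, hvm.trans hv0.symm, hv, 0, m.zero_le, hv0⟩
  by_contra! hm1
  obtain rfl : m = 1 := by omega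
  exact hv 0 one_pos (by rw [hvm, hv0, hloop])

variable (w) [Fintype V]

noncomputable def reachCount (i : V) : ℕ := {j | ReflTransGen (Arc w) i j}.ncard

variable {w}

theorem reachCount_le_of_reflTransGen {i j : V} (h : ReflTransGen (Arc w) i j) :
    reachCount w j ≤ reachCount w i :=
  Set.ncard_le_ncard (fun _ => h.trans) (Set.toFinite _)

theorem reachCount_lt_of_reflTransGen {i j : V} (hij : ReflTransGen (Arc w) i j)
    (hji : ¬ ReflTransGen (Arc w) j i) : reachCount w j < reachCount w i :=
  Set.ncard_lt_ncard ⟨fun _ => hij.trans, fun hsub => hji (hsub ReflTransGen.refl)⟩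
    (Set.toFinite _)

variable (w)

open scoped Classical in
/-- Cyclic vertices are keyed by their reach count alone, each acyclic vertex gets a key of
its own. -/
noncomputable def blockKey (i : V) : ℕ ×ₗ ℕ :=
  toLex (reachCount w i,
    if TransGen (Arc w) i i then 0 else Fintype.equivFin V i + 1)

variable {w}

theorem blockKey_le_of_arc {i j : V} (h : Arc w i j) : blockKey w j ≤ blockKey w i := by
  by_cases hji : ReflTransGen (Arc w) j i
  · have hi : TransGen (Arc w) i i := TransGen.head' h hji
    have hj : TransGen (Arc w) j j := TransGen.tail' hji h
    have hcount := (reachCount_le_of_reflTransGen (.single h)).antisymm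
      (reachCount_le_of_reflTransGen hji)
    simp [blockKey, hi, hj, hcount]
  · exact (Prod.Lex.lt_iff.2 (.inl (reachCount_lt_of_reflTransGen (.single h) hji))).le

theorem eq_of_blockKey_eq {i j : V} (hi : ¬ TransGen (Arc w) i i)
    (h : blockKey w j = blockKey w i) : j = i := by
  have htie := congrArg (fun x => (ofLex x).2) h
  by_cases hj : TransGen (Arc w) j j
  · simp [blockKey, hi, hj] at htie
  · simpa [blockKey, hi, hj, Fin.val_inj] using htie

variable [DecidableEq V]

theorem lap_blockTriangular_s10 : (lap w).BlockTriangular (blockKey w) := by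
  intro i j hlt
  have hij : i ≠ j := by rintro rfl; exact hlt.false
  by_cases hw : w i j = 0
  · simp [lap, hij, hw]
  · exact absurd (blockKey_le_of_arc hw) hlt.not_ge

theorem lap_apply_self_eq_zero_or_one (hloop : ∀ i, w i i = 0) (i : V) :
    lap w i i = 0 ∨ lap w i i = 1 := by
  by_cases hd : din w i = 0 <;> simp [lap, hd, hloop i]

end Reachability

theorem cyclic_vertices_ge_of_eigenvalues_general {V : Type*} [Fintype V] [DecidableEq V]
    (w : V → V → ℝ) (hloop : ∀ i, w i i = 0) (k : ℕ)
    (h : k ≤ (((specL w).filter fun lam => lam ≠ 0 ∧ lam ≠ 1)).card) :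
    k ≤ {i : V | CyclicVertex w i}.ncard := by
  classical
  have hcount := (lap_blockTriangular_s10 (w := w)).card_filter_charpoly_roots_le
    (fun lam => lam ≠ 0 ∧ lam ≠ 1) {i | TransGen (Arc w) i i} fun i hi =>
      ⟨fun _ => eq_of_blockKey_eq (by simpa using hi), by
        rcases lap_apply_self_eq_zero_or_one hloop i with hii | hii <;> simp [hii]⟩
  calc k ≤ #{i | TransGen (Arc w) i i} := h.trans hcount
    _ = {i | TransGen (Arc w) i i}.ncard := by rw [← Set.ncard_coe_finset]; simp
    _ ≤ {i | CyclicVertex w i}.ncard :=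
      Set.ncard_le_ncard (fun _ => cyclicVertex_of_transGen hloop) (Set.toFinite _)

/-- if at least `k` eigenvalues of `Δ` (with algebraic multiplicity) are
different from `0` and `1`, then the graph has at least `k` cyclic vertices. -/
theorem cyclic_vertices_ge_of_eigenvalues {V : Type*} [Fintype V] [DecidableEq V] [Nonempty V]
    (w : V → V → ℝ) (hloop : ∀ i, w i i = 0) (k : ℕ)
    (h : k ≤ (((specL w).filter fun lam => lam ≠ 0 ∧ lam ≠ 1)).card) :
    k ≤ {i : V | CyclicVertex w i}.ncard :=
  cyclic_vertices_ge_of_eigenvalues_general w hloop k h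
end

section
/- Let Γ be a weighted directed graph on a finite vertex set V that is k-partite (k ≥ 2) and satisfies r(j) = r for all j ∈ V. Then for every λ⁺ ∈ ℂ: λ⁺ is an eigenvalue of Δ⁺ = Δ(Γ⁺) if and only if both 1 − r·e^{2πi/k}(1 − λ⁺) and 1 − r·e^{−2πi/k}(1 − λ⁺) are eigenvalues of Δ(Γ). -/
/-- The induced subgraph on `U` is `k`-partite (in-degrees computed in `Γ`): all in-degrees
are nonzero and `U` decomposes into `k` nonempty parts, indexed cyclically by `ZMod k`
via `f`, such that an edge from `j` to `i` with `w_{ij}/d_i^in > 0` goes from part `q - 1`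
to part `q`, while an edge with `w_{ij}/d_i^in < 0` (possible only for even `k`) goes from
part `q + l` to part `q`, where `l = k/2 - 1`. -/
def IsKPartite {V : Type*} [Fintype V] (w : V → V → ℝ) (U : Finset V) (k : ℕ) : Prop :=
  (∀ i ∈ U, din w i ≠ 0) ∧
  ∃ f : V → ZMod k,
    (∀ q : ZMod k, ∃ i ∈ U, f i = q) ∧
    ∀ i ∈ U, ∀ j ∈ U, w i j ≠ 0 →
      (0 < w i j / din w i → f i = f j + 1) ∧
      (w i j / din w i < 0 → Even k ∧ f j = f i + ((k / 2 - 1 : ℕ) : ZMod k))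

open Matrix Polynomial

namespace Matrix

variable {n : Type*} [Fintype n] [DecidableEq n]

theorem charpoly_eq_of_mul_eq_mul {R : Type*} [CommRing R] {D A B : Matrix n n R}
    (hD : IsUnit D) (h : D * A = B * D) : A.charpoly = B.charpoly := by
  obtain ⟨U, rfl⟩ := hD
  rw [← charpoly_units_conj' U B, mul_assoc, ← h]
  simp

theorem isRoot_charpoly_one_sub_smul_iff {K : Type*} [Field K] (M : Matrix n n K) {c : K}
    (hc : c ≠ 0) (μ : K) :
    (1 - c • (1 - M)).charpoly.IsRoot (1 - c * (1 - μ)) ↔ M.charpoly.IsRoot μ := by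
  have hshift : scalar n (1 - c * (1 - μ)) - (1 - c • (1 - M)) = c • (scalar n μ - M) := by
    simp only [scalar_apply, ← smul_one_eq_diagonal]
    module
  simp only [IsRoot, eval_charpoly, hshift, det_smul, mul_eq_zero, pow_eq_zero_iff', hc,
    false_and, false_or]

end Matrix

theorem IsPrimitiveRoot.pow_half_eq_neg_one {R : Type*} [CommRing R] [IsDomain R] {ζ : R}
    {k : ℕ} (hζ : IsPrimitiveRoot ζ k) (hk : Even k) (hk0 : k ≠ 0) : ζ ^ (k / 2) = -1 := by
  obtain ⟨m, rfl⟩ := hk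
  have hm : m ≠ 0 := by omega
  have h2 := hζ.pow_of_dvd (p := m) hm ⟨2, by ring⟩
  rw [Nat.add_div_left _ (Nat.pos_of_ne_zero hm), Nat.div_self (Nat.pos_of_ne_zero hm)] at h2
  rw [show (m + m) / 2 = m by omega]
  exact h2.eq_neg_one_of_two_right

section Laplacian

variable {V : Type*} [Fintype V] {w : V → V → ℝ}

theorem one_le_rfun {i : V} (hd : din w i ≠ 0) : 1 ≤ rfun w i := by
  rw [rfun, if_neg hd, one_le_div (abs_pos.mpr hd), din]
  exact Finset.abs_sum_le_sum_abs _ _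

theorem din_abs {i : V} {ρ : ℝ} (hd : din w i ≠ 0) (hr : rfun w i = ρ) :
    din (fun i j => |w i j|) i = ρ * |din w i| := by
  rw [rfun, if_neg hd, div_eq_iff (abs_ne_zero.mpr hd)] at hr
  exact hr

theorem IsKPartite.exists_phase {k : ℕ} (hw : IsKPartite w Finset.univ k) (hk : 2 ≤ k) {ζ : ℂ}
    (hζ : IsPrimitiveRoot ζ k) :
    ∃ θ : V → ℂ, (∀ i, θ i ≠ 0) ∧
      ∀ i j, θ i * (w i j / din w i : ℝ) = ζ * (|w i j| / |din w i| : ℝ) * θ j := by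
  obtain ⟨-, f, -, hf⟩ := hw
  have : NeZero k := ⟨by omega⟩
  set ψ := AddChar.zmodChar k hζ.pow_eq_one
  have hψ : ∀ m : ℕ, ψ m = ζ ^ m := AddChar.zmodChar_apply' hζ.pow_eq_one
  refine ⟨fun i => ψ (f i), fun i => ?_, fun i j => ?_⟩
  · show ζ ^ (f i).val ≠ 0
    exact pow_ne_zero _ (hζ.ne_zero (by omega))
  dsimp only
  have hw_ne : w i j / din w i ≠ 0 → w i j ≠ 0 := by
    intro h hw
    simp [hw] at h
  rw [← abs_div]
  rcases lt_trichotomy (w i j / din w i) 0 with hneg | hzero | hpos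
  · obtain ⟨hkeven, hfj⟩ := (hf i (Finset.mem_univ i) j (Finset.mem_univ j)
      (hw_ne hneg.ne)).2 hneg
    have hhalf : ζ * ψ ((k / 2 - 1 : ℕ) : ZMod k) = -1 := by
      rw [hψ, ← pow_succ', Nat.sub_add_cancel (by omega)]
      exact hζ.pow_half_eq_neg_one hkeven (by omega)
    rw [abs_of_neg hneg, Complex.ofReal_neg, hfj, AddChar.map_add_eq_mul]
    linear_combination (ψ (f i) * ((w i j / din w i : ℝ) : ℂ)) * hhalf
  · simp [hzero]
  · have hfi := (hf i (Finset.mem_univ i) j (Finset.mem_univ j) (hw_ne hpos.ne')).1 hpos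
    rw [abs_of_pos hpos, hfi, AddChar.map_add_eq_mul, ← Nat.cast_one, hψ, pow_one]
    ring

variable [DecidableEq V]

theorem mem_specL_iff_isRoot (w : V → V → ℝ) (z : ℂ) :
    z ∈ specL w ↔ (lap w).charpoly.IsRoot z :=
  mem_roots (charpoly_monic _).ne_zero

theorem lap_apply_of_din_ne_zero {i : V} (hd : din w i ≠ 0) (j : V) :
    lap w i j = (1 : Matrix V V ℂ) i j - (w i j / din w i : ℝ) := by
  simp [lap, hd, one_apply]

theorem diagonal_mul_lap {ρ : ℝ} (hd : ∀ i, din w i ≠ 0) (hr : ∀ i, rfun w i = ρ) {ζ : ℂ}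
    {θ : V → ℂ}
    (hθ : ∀ i j, θ i * (w i j / din w i : ℝ) = ζ * (|w i j| / |din w i| : ℝ) * θ j) :
    diagonal θ * lap w = (1 - (ρ * ζ) • (1 - lap (fun i j => |w i j|))) * diagonal θ := by
  ext i j
  have hρ : ρ ≠ 0 := (zero_lt_one.trans_le (hr i ▸ one_le_rfun (hd i))).ne'
  have hdabs : din (fun i j => |w i j|) i ≠ 0 := by
    rw [din_abs (hd i) (hr i)]
    exact mul_ne_zero hρ (abs_ne_zero.mpr (hd i))
  have hscale : (ρ * ζ) * ((|w i j| / (ρ * |din w i|) : ℝ) : ℂ)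
      = ζ * ((|w i j| / |din w i| : ℝ) : ℂ) := by
    have : ((|din w i| : ℝ) : ℂ) ≠ 0 := by exact_mod_cast abs_ne_zero.mpr (hd i)
    have : (ρ : ℂ) ≠ 0 := by exact_mod_cast hρ
    push_cast
    field_simp
  have hdiag : θ i * (1 : Matrix V V ℂ) i j = (1 : Matrix V V ℂ) i j * θ j := by
    rcases eq_or_ne i j with rfl | hij <;> simp [one_apply, *]
  rw [diagonal_mul, mul_diagonal, lap_apply_of_din_ne_zero (hd i),
    Matrix.sub_apply, Matrix.smul_apply, Matrix.sub_apply, lap_apply_of_din_ne_zero hdabs,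
    din_abs (hd i) (hr i), smul_eq_mul]
  linear_combination hdiag - hθ i j + θ j * hscale

theorem mem_specL_abs_iff_of_isKPartite [Nonempty V] {k : ℕ} (hw : IsKPartite w Finset.univ k)
    (hk : 2 ≤ k) (hr : ∀ i, rfun w i = rmax w) {ζ : ℂ} (hζ : IsPrimitiveRoot ζ k) (μ : ℂ) :
    μ ∈ specL (fun i j => |w i j|) ↔ 1 - (rmax w : ℂ) * ζ * (1 - μ) ∈ specL w := by
  have hd : ∀ i, din w i ≠ 0 := fun i => hw.1 i (Finset.mem_univ i)
  obtain ⟨θ, hθ0, hθ⟩ := hw.exists_phase hk hζ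
  have hc : (rmax w : ℂ) * ζ ≠ 0 := by
    obtain ⟨i⟩ := ‹Nonempty V›
    have hr0 : rmax w ≠ 0 := (zero_lt_one.trans_le (hr i ▸ one_le_rfun (hd i))).ne'
    exact mul_ne_zero (by exact_mod_cast hr0) (hζ.ne_zero (by omega))
  have hsimilar := diagonal_mul_lap hd hr hθ
  rw [mem_specL_iff_isRoot, mem_specL_iff_isRoot,
    charpoly_eq_of_mul_eq_mul (isUnit_diagonal.mpr (Pi.isUnit_iff.mpr fun i => (hθ0 i).isUnit))
      hsimilar,
    isRoot_charpoly_one_sub_smul_iff _ hc]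

end Laplacian

theorem kpartite_spec_relation_general {V : Type*} [Fintype V] [DecidableEq V] [Nonempty V]
    (w : V → V → ℝ) (k : ℕ) (hk : 2 ≤ k)
    (hkp : IsKPartite w Finset.univ k) (hr : ∀ j, rfun w j = rmax w) (lamp : ℂ) :
    lamp ∈ specL (fun i j => |w i j|) ↔
      (1 - (rmax w : ℂ) * Complex.exp (2 * (Real.pi : ℂ) * Complex.I / (k : ℂ)) *
          (1 - lamp) ∈ specL w ∧
       1 - (rmax w : ℂ) * Complex.exp (-(2 * (Real.pi : ℂ) * Complex.I) / (k : ℂ)) *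
          (1 - lamp) ∈ specL w) := by
  have hζ := Complex.isPrimitiveRoot_exp k (by omega)
  have hζinv : IsPrimitiveRoot (Complex.exp (-(2 * (Real.pi : ℂ) * Complex.I) / (k : ℂ))) k := by
    rw [neg_div, Complex.exp_neg]
    exact hζ.inv
  rw [← mem_specL_abs_iff_of_isKPartite hkp hk hr hζ,
    ← mem_specL_abs_iff_of_isKPartite hkp hk hr hζinv, and_self]

/-- if `Γ` is `k`-partite and `r(j) = r` for all `j ∈ V`, then `λ⁺` is an
eigenvalue of `Δ⁺ = Δ(Γ⁺)` (where `Γ⁺` has weights `|w_{ij}|`) iff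
`1 - r·e^{±2πi/k}(1 - λ⁺)` are both eigenvalues of `Δ(Γ)`. -/
theorem kpartite_spec_relation {V : Type*} [Fintype V] [DecidableEq V] [Nonempty V]
    (w : V → V → ℝ) (hloop : ∀ i, w i i = 0) (k : ℕ) (hk : 2 ≤ k)
    (hkp : IsKPartite w Finset.univ k) (hr : ∀ j, rfun w j = rmax w) (lamp : ℂ) :
    lamp ∈ specL (fun i j => |w i j|) ↔
      (1 - (rmax w : ℂ) * Complex.exp (2 * (Real.pi : ℂ) * Complex.I / (k : ℂ)) *
          (1 - lamp) ∈ specL w ∧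
       1 - (rmax w : ℂ) * Complex.exp (-(2 * (Real.pi : ℂ) * Complex.I) / (k : ℂ)) *
          (1 - lamp) ∈ specL w) :=
  kpartite_spec_relation_general w k hk hkp hr lamp
end

section
/- Let Γ be a strongly connected weighted directed graph on a finite vertex set V with at least two vertices and nonnegative weights (w_{ij} ≥ 0 for all i,j, loops allowed), and let φ : V → ℝ be a positive function satisfying Σ_j (w_{ji}/d_j^in) φ(j) = φ(i) for all i ∈ V. Let Γ̃ be the undirected graph on V with symmetric nonnegative weights w̃_{ij} = (w_{ij}/d_i^in)φ(i) + (w_{ji}/d_j^in)φ(j). Then min_{i≠0} λ_i(Δ(Γ̃)) ≤ min_{i≠0} Re(λ_i(Δ(Γ))) and max_i Re(λ_i(Δ(Γ))) ≤ max_i λ_i(Δ(Γ̃)), where in each min the eigenvalue multiset has one copy of the eigenvalue 0 (corresponding to the constant eigenfunction) removed; that is, every eigenvalue λ of Δ(Γ) other than one copy of 0 satisfies min_{i≠0} λ_i(Δ(Γ̃)) ≤ Re(λ), and every eigenvalue λ of Δ(Γ) satisfies Re(λ) ≤ max_i λ_i(Δ(Γ̃)). -/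
open Matrix Polynomial

section generic
variable {n : Type*} [Fintype n] [DecidableEq n]
variable {n : Type*} [Fintype n] [DecidableEq n]

lemma my_charpoly_conj {R : Type*} [CommRing R] (S T A : Matrix n n R)
    (hST : S * T = 1) : (S * A * T).charpoly = A.charpoly := by
  let F : Matrix n n R →+* Matrix n n R[X] := (C : R →+* R[X]).mapMatrix
  have key : charmatrix (S * A * T) = F S * charmatrix A * F T := by
    simp only [charmatrix, Matrix.mul_sub, Matrix.sub_mul]
    congr 1
    · have h2 : F S * Matrix.scalar n (X : R[X]) = Matrix.scalar n (X : R[X]) * F S :=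
        (Matrix.scalar_commute (X : R[X]) (fun r => Commute.all _ _) (F S)).symm
      rw [h2, Matrix.mul_assoc, ← _root_.map_mul, hST, _root_.map_one, Matrix.mul_one]
    · show (RingHom.mapMatrix C) (S * A * T) = _
      rw [_root_.map_mul, _root_.map_mul]
  have hdet : (F S).det * (F T).det = 1 := by
    rw [← det_mul, ← _root_.map_mul, hST, _root_.map_one, det_one]
  rw [Matrix.charpoly, key, det_mul, det_mul, Matrix.charpoly]
  rw [mul_comm ((F S).det), mul_assoc, hdet, mul_one]

lemma my_charpoly_diagonal {R : Type*} [CommRing R] (d : n → R) :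
    (Matrix.diagonal d).charpoly = ∏ i, (X - C (d i)) := by
  have h : charmatrix (Matrix.diagonal d) = Matrix.diagonal (fun i => X - C (d i)) := by
    ext i j
    by_cases h : i = j <;> simp [charmatrix_apply, Matrix.diagonal_apply, h]
  rw [Matrix.charpoly, h, det_diagonal]

lemma my_roots_charpoly_diagonal {K : Type*} [Field K] (d : n → K) :
    (Matrix.diagonal d).charpoly.roots = Finset.univ.val.map d := by
  rw [my_charpoly_diagonal]
  have h : ∏ i, (X - C (d i)) = ((Finset.univ.val.map d).map fun a => X - C a).prod := by
    rw [Multiset.map_map]; rfl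
  rw [h, roots_multiset_prod_X_sub_C]

lemma my_eval_charpoly {R : Type*} [CommRing R] (A : Matrix n n R) (x : R) :
    A.charpoly.eval x = (Matrix.diagonal (fun _ => x) - A).det := by
  have h := RingHom.map_det (evalRingHom x) (charmatrix A)
  rw [Matrix.charpoly]
  show (evalRingHom x) (charmatrix A).det = _
  rw [h]
  congr 1
  ext i j
  by_cases h : i = j <;>
    simp [charmatrix_apply, Matrix.diagonal_apply, h, RingHom.mapMatrix_apply]

lemma my_exists_eigenvec {A : Matrix n n ℂ} {l : ℂ} (h : l ∈ A.charpoly.roots) :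
    ∃ v : n → ℂ, v ≠ 0 ∧ A *ᵥ v = l • v := by
  have hne : A.charpoly ≠ 0 := A.charpoly_monic.ne_zero
  have hroot : A.charpoly.eval l = 0 := (mem_roots hne).mp h
  rw [my_eval_charpoly] at hroot
  obtain ⟨v, hv0, hv⟩ := (Matrix.exists_mulVec_eq_zero_iff).mpr hroot
  refine ⟨v, hv0, ?_⟩
  funext i
  have h2 := congrFun hv i
  simp only [Matrix.sub_mulVec, Pi.sub_apply, Matrix.mulVec_diagonal, Pi.zero_apply] at h2
  have := sub_eq_zero.mp h2
  simpa [Pi.smul_apply, smul_eq_mul] using this.symm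

lemma my_exists_ker_vec {A : Matrix n n ℂ} {x0 : n → ℂ}
    (hx0 : star x0 ᵥ* A = 0)
    (h2 : 2 ≤ (A.charpoly.roots).count 0) :
    ∃ v : n → ℂ, v ≠ 0 ∧ A *ᵥ v = 0 ∧ star x0 ⬝ᵥ v = 0 := by
  classical
  set f := Matrix.toLin' A with hf
  have hchar : f.charpoly = A.charpoly := by
    rw [hf, ← LinearMap.charpoly_toMatrix (Matrix.toLin' A) (Pi.basisFun ℂ n),
      LinearMap.toMatrix_eq_toMatrix', LinearMap.toMatrix'_toLin']
  have hcount : (A.charpoly.roots).count 0 = A.charpoly.rootMultiplicity 0 :=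
    Polynomial.count_roots _
  have hfin : 2 ≤ Module.finrank ℂ (Module.End.maxGenEigenspace f 0) := by
    rw [LinearMap.finrank_maxGenEigenspace_zero_eq f, hchar,
      ← Polynomial.rootMultiplicity_eq_natTrailingDegree', ← hcount]
    exact h2
  set G := Module.End.maxGenEigenspace f 0 with hG
  -- the functional v ↦ ⟨x0, v⟩ restricted to G has nontrivial kernel
  let g : (n → ℂ) →ₗ[ℂ] ℂ :=
    { toFun := fun v => star x0 ⬝ᵥ v
      map_add' := fun a b => dotProduct_add _ _ _
      map_smul' := fun c a => by simp [dotProduct_smul, smul_eq_mul] }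
  have hker : ∃ u : G, u ≠ 0 ∧ g (u : n → ℂ) = 0 := by
    by_contra hcon
    push_neg at hcon
    have hinj : Function.Injective (g.domRestrict G) := by
      rw [← LinearMap.ker_eq_bot, Submodule.eq_bot_iff]
      intro u hu
      by_contra hu0
      exact hu0 (by_contra fun h' => hu0 (by
        exact absurd (hcon u (by exact fun h0 => hu0 (by rw [h0]))) (by simp_all)))
    have := LinearMap.finrank_le_finrank_of_injective hinj
    simp [Module.finrank_self] at this
    omega
  obtain ⟨u, hu0, hgu⟩ := hker
  have humem : (u : n → ℂ) ∈ Module.End.maxGenEigenspace f 0 := u.2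
  rw [Module.End.mem_maxGenEigenspace] at humem
  obtain ⟨k, hk⟩ := humem
  have hk' : (A ^ k) *ᵥ (u : n → ℂ) = 0 := by
    have hpow : ∀ (m : ℕ) (v : n → ℂ), (f ^ m) v = (A ^ m) *ᵥ v := by
      intro m
      induction m with
      | zero => intro v; simp
      | succ m ihm =>
          intro v
          rw [pow_succ, pow_succ, Module.End.mul_apply, hf, Matrix.toLin'_apply, ihm,
            Matrix.mulVec_mulVec]
    have := hk
    simpa [hpow] using hk
  have hvne : (u : n → ℂ) ≠ 0 := fun h => hu0 (Subtype.ext h)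
  have hgu' : star x0 ⬝ᵥ (u : n → ℂ) = 0 := hgu
  -- extract an honest kernel vector by descending
  clear hk hu0 hgu
  set v : n → ℂ := (u : n → ℂ) with hv
  clear_value v
  clear hv u
  induction k generalizing v with
  | zero => simp only [pow_zero, Matrix.one_mulVec] at hk'; exact absurd hk' hvne
  | succ k ih =>
      by_cases hAv : A *ᵥ v = 0
      · exact ⟨v, hvne, hAv, hgu'⟩
      · apply ih (v := A *ᵥ v)
        · rw [Matrix.mulVec_mulVec, ← pow_succ]
          exact hk'
        · exact hAv
        · rw [Matrix.dotProduct_mulVec, hx0, zero_dotProduct]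

lemma my_unitary_dot {W : Matrix n n ℂ} (hW : star W * W = 1) (x y : n → ℂ) :
    star (W *ᵥ x) ⬝ᵥ (W *ᵥ y) = star x ⬝ᵥ y := by
  rw [Matrix.star_mulVec, Matrix.dotProduct_mulVec, Matrix.vecMul_vecMul,
    ← Matrix.star_eq_conjTranspose, hW, Matrix.vecMul_one]

end generic

set_option maxHeartbeats 2000000

/-- let `Γ` be strongly connected with at least two vertices and nonnegative
weights, and let `φ > 0` satisfy `∑_j (w_{ji}/d_j^in) φ(j) = φ(i)` (a Perron vector).
Let `Γ̃` be the undirected graph with weights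
`w̃_{ij} = (w_{ij}/d_i^in)φ(i) + (w_{ji}/d_j^in)φ(j)`.  Then every eigenvalue `λ` of
`Δ(Γ)` other than one copy of `0` satisfies `min_{i≠0} λ_i(Δ(Γ̃)) ≤ Re(λ)` (i.e. some
eigenvalue of `Δ(Γ̃)` other than one copy of `0` is `≤ Re(λ)`), and every eigenvalue `λ`
of `Δ(Γ)` satisfies `Re(λ) ≤ max_i λ_i(Δ(Γ̃))`. -/
theorem perron_comparison {V : Type*} [Fintype V] [DecidableEq V] [Nonempty V]
    (w : V → V → ℝ) (hpos : ∀ i j, 0 ≤ w i j) (hcard : 2 ≤ Fintype.card V)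
    (hsc : ∀ i j : V, Relation.ReflTransGen (fun a b => w b a ≠ 0) i j)
    (phi : V → ℝ) (hphi : ∀ i, 0 < phi i)
    (hperron : ∀ i, ∑ j, w j i / din w j * phi j = phi i) :
    (∀ lam ∈ (specL w).erase 0,
      ∃ mu ∈ (specL fun i j => w i j / din w i * phi i + w j i / din w j * phi j).erase 0,
        mu.re ≤ lam.re) ∧
    (∀ lam ∈ specL w,
      ∃ mu ∈ specL fun i j => w i j / din w i * phi i + w j i / din w j * phi j,
        lam.re ≤ mu.re) := by

  classical
  -- positivity of in-degrees
  have hd : ∀ i, 0 < din w i := by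
    intro i
    obtain ⟨j, hj⟩ := Fintype.exists_ne_of_one_lt_card (by omega) i
    have hreach := hsc j i
    obtain ⟨k, -, hk⟩ := (Relation.ReflTransGen.cases_tail hreach).resolve_left
      (fun h => hj h.symm)
    refine Finset.sum_pos' (fun m _ => hpos i m) ⟨k, Finset.mem_univ k, ?_⟩
    exact lt_of_le_of_ne (hpos i k) (Ne.symm hk)
  set wt := fun i j => w i j / din w i * phi i + w j i / din w j * phi j with hwt
  have hwt_symm : ∀ i j, wt i j = wt j i := fun i j => by simp only [hwt]; ring
  have hrow : ∀ i, ∑ j, w i j / din w i = 1 := by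
    intro i
    rw [← Finset.sum_div]; exact div_self (hd i).ne'
  have hdt : ∀ i, din wt i = 2 * phi i := by
    intro i
    show ∑ j, wt i j = _
    simp only [hwt]
    rw [Finset.sum_add_distrib, ← Finset.sum_mul, hrow i, hperron i]
    ring
  -- square roots of phi
  set ps := fun i => Real.sqrt (phi i) with hps
  have hps0 : ∀ i, 0 < ps i := fun i => Real.sqrt_pos.mpr (hphi i)
  have hpssq : ∀ i, ps i * ps i = phi i := fun i => Real.mul_self_sqrt (hphi i).le
  set S : Matrix V V ℂ := Matrix.diagonal (fun i => ((ps i : ℝ) : ℂ)) with hS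
  set T : Matrix V V ℂ := Matrix.diagonal (fun i => (((ps i)⁻¹ : ℝ) : ℂ)) with hT
  have hST : S * T = 1 := by
    rw [hS, hT, Matrix.diagonal_mul_diagonal, ← Matrix.diagonal_one]
    refine congrArg Matrix.diagonal (funext fun i => ?_)
    rw [← Complex.ofReal_mul, mul_inv_cancel₀ (hps0 i).ne', Complex.ofReal_one]
  have hTS : T * S = 1 := by
    rw [hT, hS, Matrix.diagonal_mul_diagonal, ← Matrix.diagonal_one]
    refine congrArg Matrix.diagonal (funext fun i => ?_)
    rw [← Complex.ofReal_mul, inv_mul_cancel₀ (hps0 i).ne', Complex.ofReal_one]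
  set A := S * lap w * T with hA
  set H := S * lap wt * T with hHdef
  have hlapw : ∀ i j, lap w i j = (((if i = j then 1 else 0) - w i j / din w i : ℝ) : ℂ) := by
    intro i j
    show (if din w i = 0 then 0 else _) = _
    rw [if_neg (hd i).ne']
    push_cast
    split <;> simp
  have hdt0 : ∀ i, din wt i ≠ 0 := fun i => by
    rw [hdt i]; exact (mul_pos two_pos (hphi i)).ne'
  have hlapwt : ∀ i j, lap wt i j = (((if i = j then 1 else 0) - wt i j / (2 * phi i) : ℝ) : ℂ) := by
    intro i j
    show (if din wt i = 0 then 0 else _) = _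
    rw [if_neg (hdt0 i), hdt i]
    push_cast
    split <;> simp
  have hAe : ∀ i j, A i j =
      ((ps i * ((if i = j then 1 else 0) - w i j / din w i) * (ps j)⁻¹ : ℝ) : ℂ) := by
    intro i j
    rw [hA, hS, hT, Matrix.mul_diagonal, Matrix.diagonal_mul, hlapw]
    push_cast
    ring
  have hHe : ∀ i j, H i j =
      ((ps i * ((if i = j then 1 else 0) - wt i j / (2 * phi i)) * (ps j)⁻¹ : ℝ) : ℂ) := by
    intro i j
    rw [hHdef, hS, hT, Matrix.mul_diagonal, Matrix.diagonal_mul, hlapwt]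
    push_cast
    ring
  -- H is Hermitian
  have hHerm : H.IsHermitian := by
    rw [Matrix.IsHermitian]
    ext i j
    rw [Matrix.conjTranspose_apply, hHe, hHe, Complex.star_def, Complex.conj_ofReal]
    by_cases hij : i = j
    · rw [hij]
    · rw [if_neg hij, if_neg (Ne.symm hij)]
      norm_cast
      rw [hwt_symm j i, ← hpssq i, ← hpssq j]
      field_simp [(hps0 i).ne', (hps0 j).ne']
      ring
  -- A + Aᴴ = 2 • H
  have hAH : A + Aᴴ = (2 : ℂ) • H := by
    ext i j
    rw [Matrix.add_apply, Matrix.smul_apply, Matrix.conjTranspose_apply, hAe, hAe, hHe,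
      Complex.star_def, Complex.conj_ofReal, smul_eq_mul]
    rw [show ((2:ℂ) = ((2:ℝ) : ℂ)) by norm_cast, ← Complex.ofReal_mul, ← Complex.ofReal_add]
    congr 1
    by_cases hij : i = j
    · subst hij
      rw [if_pos rfl]
      have h1 : wt i i = 2 * (w i i / din w i * phi i) := by rw [hwt]; ring
      have hcan : ∀ y : ℝ, ps i * y * (ps i)⁻¹ = y := fun y => by
        rw [mul_comm (ps i) y, mul_assoc, mul_inv_cancel₀ (hps0 i).ne', mul_one]
      rw [hcan, hcan]
      have h2 : wt i i / (2 * phi i) = w i i / din w i := by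
        rw [h1]
        have hne : (2 : ℝ) * phi i ≠ 0 := (mul_pos two_pos (hphi i)).ne'
        calc 2 * (w i i / din w i * phi i) / (2 * phi i)
            = w i i / din w i * (2 * phi i) / (2 * phi i) := by ring
          _ = w i i / din w i := mul_div_cancel_right₀ _ hne
      rw [h2]
      ring
    · rw [if_neg hij, if_neg (Ne.symm hij)]
      have h1 : wt i j = w i j / din w i * phi i + w j i / din w j * phi j := by rw [hwt]
      have hm : ps i * ps j ≠ 0 := mul_ne_zero (hps0 i).ne' (hps0 j).ne'
      rw [← mul_left_inj' hm]
      have c1 : ∀ y : ℝ, ps i * y * (ps j)⁻¹ * (ps i * ps j) = y * (ps i * ps i) := fun y => by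
        field_simp [(hps0 j).ne']
      have c2 : ∀ y : ℝ, ps j * y * (ps i)⁻¹ * (ps i * ps j) = y * (ps j * ps j) := fun y => by
        field_simp [(hps0 i).ne']
      rw [add_mul, c1, c2, mul_assoc 2, c1, hpssq i, hpssq j, h1]
      field_simp [(hphi i).ne', (hd i).ne', (hd j).ne']
      ring
  -- the Perron vector of square roots
  set x0 : V → ℂ := fun i => ((ps i : ℝ) : ℂ) with hx0def
  have hx0ne : x0 ≠ 0 := by
    intro h
    have h2 := congrFun h (Classical.arbitrary V)
    simp only [hx0def, Pi.zero_apply, Complex.ofReal_eq_zero] at h2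
    exact (hps0 _).ne' h2
  have hAx0 : A *ᵥ x0 = 0 := by
    funext i
    show ∑ j, A i j * x0 j = 0
    have e : ∀ j, A i j * x0 j =
        ((ps i * ((if i = j then 1 else 0) - w i j / din w i) : ℝ) : ℂ) := fun j => by
      rw [hAe i j, hx0def, ← Complex.ofReal_mul]
      congr 1
      rw [mul_assoc, inv_mul_cancel₀ (hps0 j).ne', mul_one]
    rw [Finset.sum_congr rfl (fun j _ => e j), ← Complex.ofReal_sum, ← Finset.mul_sum]
    have h0 : ∑ j, ((if i = j then (1:ℝ) else 0) - w i j / din w i) = 0 := by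
      rw [Finset.sum_sub_distrib, hrow i]
      simp
    rw [h0, mul_zero, Complex.ofReal_zero]
  have hAtx0 : Aᴴ *ᵥ x0 = 0 := by
    funext i
    show ∑ j, Aᴴ i j * x0 j = 0
    have e : ∀ j, Aᴴ i j * x0 j =
        ((((if j = i then 1 else 0) * phi j - w j i / din w j * phi j) * (ps i)⁻¹ : ℝ) : ℂ) := by
      intro j
      rw [Matrix.conjTranspose_apply, hAe j i, hx0def, Complex.star_def, Complex.conj_ofReal,
        ← Complex.ofReal_mul]
      congr 1
      rw [← hpssq j]
      ring
    rw [Finset.sum_congr rfl (fun j _ => e j), ← Complex.ofReal_sum, ← Finset.sum_mul]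
    have h0 : ∑ j, ((if j = i then (1:ℝ) else 0) * phi j - w j i / din w j * phi j) = 0 := by
      rw [Finset.sum_sub_distrib, hperron i]
      simp
    rw [h0, zero_mul, Complex.ofReal_zero]
  have hx0A : star x0 ᵥ* A = 0 := by
    have := congrArg star hAtx0
    rwa [Matrix.star_mulVec, Matrix.conjTranspose_conjTranspose, star_zero] at this
  have hHx0 : H *ᵥ x0 = 0 := by
    have h1 : (A + Aᴴ) *ᵥ x0 = 0 := by
      rw [Matrix.add_mulVec, hAx0, hAtx0, add_zero]
    rw [hAH, Matrix.smul_mulVec] at h1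
    exact (smul_eq_zero.mp h1).resolve_left two_ne_zero
  -- charpoly identification
  have hcA : A.charpoly = (lap w).charpoly := my_charpoly_conj S T (lap w) hST
  have hcH : H.charpoly = (lap wt).charpoly := my_charpoly_conj S T (lap wt) hST
  -- spectral theorem data
  set U : Matrix V V ℂ := (hHerm.eigenvectorUnitary : Matrix V V ℂ) with hUdef
  set ev : V → ℝ := hHerm.eigenvalues with hevdef
  have hU1 : U * star U = 1 := Matrix.mem_unitaryGroup_iff.mp hHerm.eigenvectorUnitary.2
  have hU2 : star U * U = 1 := Matrix.mem_unitaryGroup_iff'.mp hHerm.eigenvectorUnitary.2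
  set D : Matrix V V ℂ := Matrix.diagonal (fun i => ((ev i : ℝ) : ℂ)) with hDdef
  have hspec : H = U * D * star U := hHerm.spectral_theorem
  have hrootsH : (lap wt).charpoly.roots = Finset.univ.val.map (fun i => ((ev i : ℝ) : ℂ)) := by
    rw [← hcH, hspec, my_charpoly_conj U (star U) D hU1, hDdef, my_roots_charpoly_diagonal]
  -- quadratic form identities
  have hdotUU : ∀ x y : V → ℂ, star (star U *ᵥ x) ⬝ᵥ (star U *ᵥ y) = star x ⬝ᵥ y := by
    intro x y
    have h : star (star U) * star U = 1 := by rwa [star_star]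
    exact my_unitary_dot h x y
  have hUc : ∀ v : V → ℂ, U *ᵥ (star U *ᵥ v) = v := by
    intro v
    rw [Matrix.mulVec_mulVec, hU1, Matrix.one_mulVec]
  have hsqc : ∀ z : ℂ, star z * z = (Complex.normSq z : ℂ) := by
    intro z
    rw [Complex.star_def, mul_comm, Complex.mul_conj]
  have hquad : ∀ v : V → ℂ, star v ⬝ᵥ (H *ᵥ v)
      = ((∑ i, ev i * Complex.normSq ((star U *ᵥ v) i) : ℝ) : ℂ) := by
    intro v
    have h1 : H *ᵥ v = U *ᵥ (D *ᵥ (star U *ᵥ v)) := by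
      rw [hspec, ← Matrix.mulVec_mulVec, ← Matrix.mulVec_mulVec]
    have h3 : star (star U *ᵥ v) = star v ᵥ* U := by
      rw [Matrix.star_mulVec, Matrix.star_eq_conjTranspose, Matrix.conjTranspose_conjTranspose]
    have h2 : ∀ i, star ((star U *ᵥ v) i) * (D *ᵥ (star U *ᵥ v)) i
        = ((ev i * Complex.normSq ((star U *ᵥ v) i) : ℝ) : ℂ) := by
      intro i
      rw [hDdef, Matrix.mulVec_diagonal]
      rw [show star ((star U *ᵥ v) i) * ((ev i : ℂ) * (star U *ᵥ v) i)
          = (ev i : ℂ) * (star ((star U *ᵥ v) i) * (star U *ᵥ v) i) by ring, hsqc]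
      push_cast
      ring
    calc star v ⬝ᵥ (H *ᵥ v)
        = star (star U *ᵥ v) ⬝ᵥ (D *ᵥ (star U *ᵥ v)) := by
          rw [h1, Matrix.dotProduct_mulVec, ← h3]
      _ = ∑ i, star ((star U *ᵥ v) i) * (D *ᵥ (star U *ᵥ v)) i := rfl
      _ = ∑ i, ((ev i * Complex.normSq ((star U *ᵥ v) i) : ℝ) : ℂ) :=
          Finset.sum_congr rfl (fun i _ => h2 i)
      _ = _ := (Complex.ofReal_sum _ _).symm
  have hnorm : ∀ v : V → ℂ, star v ⬝ᵥ v
      = ((∑ i, Complex.normSq ((star U *ᵥ v) i) : ℝ) : ℂ) := by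
    intro v
    calc star v ⬝ᵥ v
        = star (star U *ᵥ v) ⬝ᵥ (star U *ᵥ v) := (hdotUU v v).symm
      _ = ∑ i, star ((star U *ᵥ v) i) * (star U *ᵥ v) i := rfl
      _ = ∑ i, ((Complex.normSq ((star U *ᵥ v) i) : ℝ) : ℂ) :=
          Finset.sum_congr rfl (fun i _ => hsqc _)
      _ = _ := (Complex.ofReal_sum _ _).symm
  have hray : ∀ (lam : ℂ) (v : V → ℂ), A *ᵥ v = lam • v →
      star v ⬝ᵥ (H *ᵥ v) = ((lam.re : ℝ) : ℂ) * (star v ⬝ᵥ v) := by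
    intro lam v hv
    have h2 : (2:ℂ) • (H *ᵥ v) = (A + Aᴴ) *ᵥ v := by
      rw [hAH, Matrix.smul_mulVec]
    have h3 : star v ⬝ᵥ ((A + Aᴴ) *ᵥ v) = (lam + star lam) * (star v ⬝ᵥ v) := by
      rw [Matrix.add_mulVec, dotProduct_add, hv, dotProduct_smul,
        Matrix.dotProduct_mulVec, ← Matrix.star_mulVec, hv, star_smul,
        smul_dotProduct, smul_eq_mul, smul_eq_mul]
      ring
    have h4 : star v ⬝ᵥ ((2:ℂ) • (H *ᵥ v)) = (2:ℂ) * (star v ⬝ᵥ (H *ᵥ v)) := by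
      rw [dotProduct_smul, smul_eq_mul]
    have h5 : (2:ℂ) * (star v ⬝ᵥ (H *ᵥ v)) = (lam + star lam) * (star v ⬝ᵥ v) := by
      rw [← h4, h2, h3]
    have h6 : lam + star lam = (2:ℂ) * ((lam.re : ℝ) : ℂ) := by
      rw [Complex.star_def, Complex.add_conj]
      push_cast
      ring
    rw [h6] at h5
    have h7 : (2:ℂ) * (star v ⬝ᵥ (H *ᵥ v)) = 2 * (((lam.re : ℝ) : ℂ) * (star v ⬝ᵥ v)) := by
      rw [h5]; ring
    exact mul_left_cancel₀ (two_ne_zero' ℂ) h7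
  -- engine: real identity for eigenpairs
  have engine : ∀ (lam : ℂ) (v : V → ℂ), v ≠ 0 → A *ᵥ v = lam • v →
      lam.re * (∑ i, Complex.normSq ((star U *ᵥ v) i))
        = (∑ i, ev i * Complex.normSq ((star U *ᵥ v) i)) ∧
      0 < ∑ i, Complex.normSq ((star U *ᵥ v) i) := by
    intro lam v hv0 hv
    have h1 := hquad v
    rw [hray lam v hv, hnorm v, ← Complex.ofReal_mul] at h1
    constructor
    · exact_mod_cast h1
    · have hcne : star U *ᵥ v ≠ 0 := fun h => hv0 (by rw [← hUc v, h, Matrix.mulVec_zero])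
      obtain ⟨j, hj⟩ := Function.ne_iff.mp hcne
      refine Finset.sum_pos' (fun i _ => Complex.normSq_nonneg _) ⟨j, Finset.mem_univ j, ?_⟩
      rw [Complex.normSq_pos]
      simpa using hj
  have hspecw : specL w = A.charpoly.roots := by rw [specL, hcA]
  have hspecwt : specL wt = Finset.univ.val.map (fun i => ((ev i : ℝ) : ℂ)) := by
    rw [specL, hrootsH]
  have hex_pos : ∀ v : V → ℂ, 0 < (∑ i, Complex.normSq ((star U *ᵥ v) i)) →
      ∃ j, 0 < Complex.normSq ((star U *ᵥ v) j) := by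
    intro v hv
    by_contra h
    push_neg at h
    exact absurd (Finset.sum_nonpos (fun i _ => h i)) (not_le.mpr hv)
  constructor
  · -- part 1
    intro lam hlam
    obtain ⟨v, hv0, hv, hvx0⟩ :
        ∃ v : V → ℂ, v ≠ 0 ∧ A *ᵥ v = lam • v ∧ star x0 ⬝ᵥ v = 0 := by
      by_cases h0 : lam = 0
      · subst h0
        have hcount : 2 ≤ Multiset.count 0 A.charpoly.roots := by
          have h1 := Multiset.count_pos.mpr hlam
          rw [Multiset.count_erase_self, hspecw] at h1
          omega
        obtain ⟨v, hv0, hvk, hvx⟩ := my_exists_ker_vec hx0A hcount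
        exact ⟨v, hv0, by rw [hvk, zero_smul], hvx⟩
      · have hmem : lam ∈ A.charpoly.roots := by
          rw [← hspecw]; exact Multiset.mem_of_mem_erase hlam
        obtain ⟨v, hv0, hv⟩ := my_exists_eigenvec hmem
        refine ⟨v, hv0, hv, ?_⟩
        have h1 : star x0 ⬝ᵥ (A *ᵥ v) = 0 := by
          rw [Matrix.dotProduct_mulVec, hx0A, zero_dotProduct]
        rw [hv, dotProduct_smul, smul_eq_mul] at h1
        exact (mul_eq_zero.mp h1).resolve_left h0
    obtain ⟨heq, hN⟩ := engine lam v hv0 hv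
    -- kernel coordinates of x0
    have hDe : ∀ i, (ev i : ℂ) * (star U *ᵥ x0) i = 0 := by
      intro i
      have h1 : D *ᵥ (star U *ᵥ x0) = 0 := by
        have h2 : star U *ᵥ (H *ᵥ x0) = D *ᵥ (star U *ᵥ x0) := by
          rw [hspec, Matrix.mulVec_mulVec, Matrix.mulVec_mulVec, ← Matrix.mul_assoc,
            ← Matrix.mul_assoc, hU2, Matrix.one_mul, ← Matrix.mulVec_mulVec]
        rw [hHx0, Matrix.mulVec_zero] at h2
        exact h2.symm
      have h3 := congrFun h1 i
      rwa [hDdef, Matrix.mulVec_diagonal, Pi.zero_apply] at h3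
    have hene : star U *ᵥ x0 ≠ 0 := fun h => hx0ne (by rw [← hUc x0, h, Matrix.mulVec_zero])
    obtain ⟨i0, hi0⟩ := Function.ne_iff.mp hene
    simp only [Pi.zero_apply] at hi0
    have hev0 : ev i0 = 0 := by
      rcases mul_eq_zero.mp (hDe i0) with h | h
      · exact_mod_cast h
      · exact absurd h hi0
    have hec : star (star U *ᵥ x0) ⬝ᵥ (star U *ᵥ v) = 0 := by
      rw [hdotUU x0 v]; exact hvx0
    -- find an index i1 ≠ i0 with ev i1 ≤ lam.re
    have hkey : ∃ i1, i1 ≠ i0 ∧ ev i1 ≤ lam.re := by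
      by_contra hcon
      push_neg at hcon
      obtain ⟨j, hj⟩ := hex_pos v hN
      have hfinal : ∀ hle : (∀ i ∈ Finset.univ, lam.re * Complex.normSq ((star U *ᵥ v) i)
            ≤ ev i * Complex.normSq ((star U *ᵥ v) i)),
          ∀ hst : (∃ i ∈ Finset.univ, lam.re * Complex.normSq ((star U *ᵥ v) i)
            < ev i * Complex.normSq ((star U *ᵥ v) i)), False := by
        intro hle hst
        obtain ⟨i', hi'm, hi'⟩ := hst
        have h5 := Finset.sum_lt_sum hle ⟨i', hi'm, hi'⟩
        rw [← Finset.mul_sum, heq] at h5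
        exact lt_irrefl _ h5
      by_cases hsign : 0 ≤ lam.re
      · -- all ev i (i ≠ i0) exceed lam.re ≥ 0, so x0-coordinates vanish off i0
        have hezero : ∀ i, i ≠ i0 → (star U *ᵥ x0) i = 0 := by
          intro i hi
          rcases mul_eq_zero.mp (hDe i) with h | h
          · exfalso
            have h6 : ev i = 0 := by exact_mod_cast h
            have := hcon i hi
            rw [h6] at this
            exact absurd hsign (not_le.mpr this)
          · exact h
        have hci0 : (star U *ᵥ v) i0 = 0 := by
          have h2 : star (star U *ᵥ x0) ⬝ᵥ (star U *ᵥ v)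
              = star ((star U *ᵥ x0) i0) * (star U *ᵥ v) i0 := by
            refine Finset.sum_eq_single i0 (fun b _ hb => ?_) (fun h => absurd (Finset.mem_univ i0) h)
            rw [Pi.star_apply, hezero b hb, star_zero, zero_mul]
          rw [h2] at hec
          exact (mul_eq_zero.mp hec).resolve_left (star_ne_zero.mpr hi0)
        have hjne : j ≠ i0 := by
          intro h
          rw [h, hci0] at hj
          simp [Complex.normSq] at hj
        refine hfinal (fun i _ => ?_) ⟨j, Finset.mem_univ j, ?_⟩
        · rcases eq_or_ne i i0 with rfl | hi
          · rw [hci0]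
            simp
          · exact mul_le_mul_of_nonneg_right (hcon i hi).le (Complex.normSq_nonneg _)
        · exact mul_lt_mul_of_pos_right (hcon j hjne) hj
      · -- lam.re < 0 < everything except ev i0 = 0 > lam.re as well
        have hall : ∀ i, lam.re < ev i := by
          intro i
          rcases eq_or_ne i i0 with rfl | hi
          · rw [hev0]; linarith
          · exact hcon i hi
        refine hfinal (fun i _ => mul_le_mul_of_nonneg_right (hall i).le
          (Complex.normSq_nonneg _)) ⟨j, Finset.mem_univ j, mul_lt_mul_of_pos_right (hall j) hj⟩
    obtain ⟨i1, hi1ne, hi1le⟩ := hkey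
    refine ⟨((ev i1 : ℝ) : ℂ), ?_, by rw [Complex.ofReal_re]; exact hi1le⟩
    have hsplit : specL wt
        = ((ev i0 : ℝ) : ℂ) ::ₘ (Finset.univ.val.erase i0).map (fun i => ((ev i : ℝ) : ℂ)) := by
      rw [hspecwt]
      conv_lhs => rw [← Multiset.cons_erase (show i0 ∈ Finset.univ.val from Finset.mem_univ i0),
        Multiset.map_cons]
    rw [hsplit, hev0, Complex.ofReal_zero, Multiset.erase_cons_head]
    exact Multiset.mem_map_of_mem _ ((Multiset.mem_erase_of_ne hi1ne).mpr (Finset.mem_univ i1))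
  · -- part 2
    intro lam hlam
    rw [hspecw] at hlam
    obtain ⟨v, hv0, hv⟩ := my_exists_eigenvec hlam
    obtain ⟨heq, hN⟩ := engine lam v hv0 hv
    obtain ⟨i0, -, hmax⟩ := Finset.exists_max_image Finset.univ ev
      ⟨Classical.arbitrary V, Finset.mem_univ _⟩
    refine ⟨((ev i0 : ℝ) : ℂ), ?_, ?_⟩
    · rw [hspecwt]
      exact Multiset.mem_map_of_mem _ (Finset.mem_univ i0)
    · rw [Complex.ofReal_re]
      have h5 : ∑ i, ev i * Complex.normSq ((star U *ᵥ v) i)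
          ≤ ∑ i, ev i0 * Complex.normSq ((star U *ᵥ v) i) :=
        Finset.sum_le_sum (fun i _ => mul_le_mul_of_nonneg_right (hmax i (Finset.mem_univ i))
          (Complex.normSq_nonneg _))
      rw [← Finset.mul_sum] at h5
      rw [← heq] at h5
      exact le_of_mul_le_mul_right h5 hN
end

section
/- Let Γ be a weighted directed graph on a finite vertex set V (loops allowed) with d_i^in ≠ 0 for all i ∈ V, and let l ≥ 2 be an integer. Define the neighborhood graph Γ[l] on V by the weights w_{ij}[l] = Σ_{k_1,…,k_{l−1}∈V} (1/d^in_{k_1})⋯(1/d^in_{k_{l−1}}) · w_{i k_1} w_{k_1 k_2} ⋯ w_{k_{l−1} j}. Then: (i) the in-degrees coincide, d_i^in[l] := Σ_j w_{ij}[l] = d_i^in for every i ∈ V; and (ii) the normalized Laplace operators satisfy Δ(Γ[l]) = I − (I − Δ(Γ))^l, i.e., Δ(Γ[l]) = I − P^l where P = I − Δ(Γ). -/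
/-- The weights of the neighborhood graph `Γ[l]`:
`w_{ij}[l] = ∑_{k_1,…,k_{l-1}} (1/d_{k_1})⋯(1/d_{k_{l-1}}) w_{i k_1} w_{k_1 k_2} ⋯ w_{k_{l-1} j}`,
written compactly as `d_i^in · (M^l)_{ij}` where `M_{pq} = w_{pq}/d_p^in` is the matrix of
normalized weights. -/
noncomputable def nbrw {V : Type*} [Fintype V] [DecidableEq V] (w : V → V → ℝ) (l : ℕ) :
    V → V → ℝ :=
  fun i j => din w i * (((Matrix.of fun p q => w p q / din w p) : Matrix V V ℝ) ^ l) i j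

open Matrix

/-!
With `P_{ij} = w_{ij} / d_i^in`, the matrix of `I - Δ(Γ)`, the neighborhood weights are
`d_i^in (P^l)_{ij}`. Since `P` has row sums one, so has `P^l`, which gives (i); then the
normalized weights of `Γ[l]` are exactly `P^l`, which gives (ii).
-/

theorem Matrix.pow_mulVec_eq_self {n R : Type*} [Fintype n] [DecidableEq n] [Semiring R]
    {M : Matrix n n R} {v : n → R} (h : M *ᵥ v = v) (l : ℕ) : M ^ l *ᵥ v = v := by
  induction l with
  | zero => exact one_mulVec v
  | succ l ih => rw [pow_succ, ← mulVec_mulVec, h, ih]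

section NormalizedWeights

variable {V : Type*} [Fintype V] {w : V → V → ℝ}

noncomputable def normalizedWeights (w : V → V → ℝ) : Matrix V V ℝ :=
  Matrix.of fun p q => w p q / din w p

theorem normalizedWeights_mulVec_one (hd : ∀ i, din w i ≠ 0) :
    normalizedWeights w *ᵥ 1 = 1 := by
  ext i
  simp only [mulVec, dotProduct, normalizedWeights, of_apply, Pi.one_apply, mul_one,
    ← Finset.sum_div]
  exact div_self (hd i)

theorem din_nbrw [DecidableEq V] (hd : ∀ i, din w i ≠ 0) (l : ℕ) (i : V) :
    din (nbrw w l) i = din w i := by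
  have hrow : ∑ j, (normalizedWeights w ^ l) i j = 1 := by
    simpa [mulVec, dotProduct] using
      congrFun (pow_mulVec_eq_self (normalizedWeights_mulVec_one hd) l) i
  calc din (nbrw w l) i = din w i * ∑ j, (normalizedWeights w ^ l) i j := by
        simp only [din, nbrw, normalizedWeights, Finset.mul_sum]
    _ = din w i := by rw [hrow, mul_one]

theorem normalizedWeights_nbrw [DecidableEq V] (hd : ∀ i, din w i ≠ 0) (l : ℕ) :
    normalizedWeights (nbrw w l) = normalizedWeights w ^ l := by
  ext i j
  simp only [normalizedWeights, of_apply, din_nbrw hd, nbrw]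
  exact mul_div_cancel_left₀ _ (hd i)

theorem lap_eq_one_sub_normalizedWeights [DecidableEq V] (hd : ∀ i, din w i ≠ 0) :
    lap w = 1 - (normalizedWeights w).map Complex.ofReal := by
  ext i j
  simp only [lap, normalizedWeights, of_apply, Matrix.sub_apply, Matrix.map_apply,
    Matrix.one_apply, if_neg (hd i)]

end NormalizedWeights

theorem neighborhood_graph_laplacian_general {V : Type*} [Fintype V] [DecidableEq V]
    (w : V → V → ℝ) (hd : ∀ i, din w i ≠ 0) (l : ℕ) :
    (∀ i, din (nbrw w l) i = din w i) ∧
    lap (nbrw w l) = 1 - ((1 : Matrix V V ℂ) - lap w) ^ l := by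
  have hd_nbrw : ∀ i, din (nbrw w l) i ≠ 0 := fun i => din_nbrw hd l i ▸ hd i
  refine ⟨din_nbrw hd l, ?_⟩
  rw [lap_eq_one_sub_normalizedWeights hd_nbrw, lap_eq_one_sub_normalizedWeights hd,
    sub_sub_cancel, normalizedWeights_nbrw hd]
  exact congrArg _ (Matrix.map_pow _ Complex.ofRealHom l)

/-- for a graph with all in-degrees nonzero (loops allowed) and `l ≥ 2`, the
neighborhood graph `Γ[l]` satisfies: (i) `d_i^in[l] = d_i^in` for all `i`; and
(ii) `Δ(Γ[l]) = I - (I - Δ(Γ))^l`. -/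
theorem neighborhood_graph_laplacian {V : Type*} [Fintype V] [DecidableEq V] [Nonempty V]
    (w : V → V → ℝ) (hd : ∀ i, din w i ≠ 0) (l : ℕ) (hl : 2 ≤ l) :
    (∀ i, din (nbrw w l) i = din w i) ∧
    lap (nbrw w l) = 1 - ((1 : Matrix V V ℂ) - lap w) ^ l :=
  neighborhood_graph_laplacian_general w hd l
end
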